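/- arXiv:math/0208133 — 5 statements merged into one kernel-verified Lean document; each statement's English description precedes it below -/
import Mathlib

section
/- Let K : ℝ → ℝ be continuous and periodic with period 1 (the curvature along a closed geodesic of length 1, lifted to the universal cover). Then the following are equivalent: (i) for every C¹ function f : ℝ → ℝ with f(t+1) = f(t) for all t, ∫₀¹ K f² ≤ ∫₀¹ (f')²; (ii) for every C¹ function f : ℝ → ℝ with compact support, ∫_ℝ K f² ≤ ∫_ℝ (f')². (A closed geodesic is stable if and only if its universal cover is stable.) -/
/-!
(ii) ⇒ (i): cut a periodic `f` off to `[-1, n + 1]`. By periodicity of `K` and `f`, the index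
form of the cut-off function is `n` times the index form of `f` over one period plus two
boundary terms independent of `n`, so its nonnegativity for all `n` forces that of the latter.

(i) ⇒ (ii): for compactly supported `f` and `η > 0`, test (i) with the periodic function
`g = √(η + ∑ₖ f(· + k)²)`. Periodicity of `K` gives `∫₀¹ K g² = η ∫₀¹ K + ∫ K f²`, while
Cauchy–Schwarz gives `g'² ≤ ∑ₖ f'(· + k)²`, whence `∫₀¹ g'² ≤ ∫ f'²`. Let `η → 0`.
-/

open MeasureTheory Set Filter Topology Function Real

def IsPeriodicStable (K : ℝ → ℝ) : Prop :=
  ∀ f : ℝ → ℝ, ContDiff ℝ 1 f → (∀ t, f (t + 1) = f t) →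
    (∫ t in (0:ℝ)..1, K t * (f t) ^ 2) ≤ ∫ t in (0:ℝ)..1, (deriv f t) ^ 2

def IsLineStable (K : ℝ → ℝ) : Prop :=
  ∀ f : ℝ → ℝ, ContDiff ℝ 1 f → HasCompactSupport f →
    (∫ t, K t * (f t) ^ 2) ≤ ∫ t, (deriv f t) ^ 2

theorem le_of_forall_pos_add_mul_le {a b c : ℝ} (h : ∀ η > 0, a + η * c ≤ b) : a ≤ b := by
  have hlim : Tendsto (fun η => a + η * c) (𝓝[>] 0) (𝓝 a) := by
    have hc : Continuous fun η : ℝ => a + η * c := by fun_prop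
    simpa using (hc.tendsto 0).mono_left nhdsWithin_le_nhds
  exact le_of_tendsto hlim (eventually_nhdsWithin_of_forall h)

theorem nonneg_of_forall_nat_add_mul_nonneg {a x : ℝ} (h : ∀ n : ℕ, 0 ≤ a + n * x) :
    0 ≤ x := by
  by_contra! hx
  obtain ⟨n, hn⟩ := exists_nat_gt (a / -x)
  have hnonneg := h n
  rw [div_lt_iff₀ (neg_pos.2 hx)] at hn
  linarith

theorem sq_deriv_sqrt_add_sum_sq_le {ι : Type*} (s : Finset ι) {a : ι → ℝ → ℝ} {η t : ℝ}
    (hη : 0 < η) (ha : ∀ i ∈ s, DifferentiableAt ℝ (a i) t) :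
    deriv (fun x => √(η + ∑ i ∈ s, a i x ^ 2)) t ^ 2 ≤ ∑ i ∈ s, deriv (a i) t ^ 2 := by
  have hpos : 0 < η + ∑ i ∈ s, a i t ^ 2 := by positivity
  have hsum : HasDerivAt (fun x => η + ∑ i ∈ s, a i x ^ 2)
      (2 * ∑ i ∈ s, a i t * deriv (a i) t) t := by
    rw [Finset.mul_sum]
    refine (HasDerivAt.fun_sum fun i hi => ?_).const_add η
    exact ((ha i hi).hasDerivAt.fun_pow 2).congr_deriv (by norm_num [mul_assoc])
  have hCS := Finset.sum_mul_sq_le_sq_mul_sq s (fun i => a i t) (fun i => deriv (a i) t)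
  rw [(hsum.sqrt hpos.ne').deriv, div_pow, mul_pow, mul_pow, Real.sq_sqrt hpos.le,
    div_le_iff₀ (by positivity)]
  nlinarith [Finset.sum_nonneg fun i (_ : i ∈ s) => sq_nonneg (deriv (a i) t)]

theorem Function.Periodic.deriv {f : ℝ → ℝ} {c : ℝ} (h : Periodic f c) :
    Periodic (deriv f) c :=
  fun t => by rw [← deriv_comp_add_const, show (fun x => f (x + c)) = f from funext h]

theorem HasCompactSupport.sq {f : ℝ → ℝ} (hf : HasCompactSupport f) :
    HasCompactSupport fun x => f x ^ 2 :=
  hf.comp_left (g := fun x => x ^ 2) (by simp)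

noncomputable def periodization (F : ℝ → ℝ) (t : ℝ) : ℝ := ∑' k : ℤ, F (t + k)

theorem periodization_periodic (F : ℝ → ℝ) : Periodic (periodization F) 1 := fun t => by
  show ∑' k : ℤ, F (t + 1 + k) = ∑' k : ℤ, F (t + k)
  rw [← (Equiv.addRight (1 : ℤ)).tsum_eq (fun k : ℤ => F (t + k))]
  exact tsum_congr fun k => by push_cast [Equiv.coe_addRight]; ring_nf

section CompactSupport

variable {F : ℝ → ℝ}

theorem HasCompactSupport.exists_finset_comp_add_intCast_eq_zero (hF : HasCompactSupport F)
    (a b : ℝ) : ∃ s : Finset ℤ, ∀ t ∈ Icc a b, ∀ k ∉ s, F (t + k) = 0 := by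
  obtain ⟨R, hR⟩ := hF.isBounded.subset_closedBall 0
  refine ⟨Finset.Icc ⌈-R - b⌉ ⌊R - a⌋, fun t ht k hk =>
    image_eq_zero_of_notMem_tsupport fun hmem => hk ?_⟩
  have hk := hR hmem
  rw [Real.closedBall_eq_Icc, zero_sub, zero_add] at hk
  rw [Finset.mem_Icc, Int.ceil_le, Int.le_floor]
  constructor <;> linarith [ht.1, ht.2, hk.1, hk.2]

theorem HasCompactSupport.summable_comp_add_intCast (hF : HasCompactSupport F) (t : ℝ) :
    Summable fun k : ℤ => F (t + k) :=
  let ⟨_, hs⟩ := hF.exists_finset_comp_add_intCast_eq_zero t t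
  summable_of_ne_finset_zero (hs t ⟨le_rfl, le_rfl⟩)

theorem HasCompactSupport.periodization_eventuallyEq_sum (hF : HasCompactSupport F) (t₀ : ℝ) :
    ∃ s : Finset ℤ, periodization F =ᶠ[𝓝 t₀] fun t => ∑ k ∈ s, F (t + k) := by
  obtain ⟨s, hs⟩ := hF.exists_finset_comp_add_intCast_eq_zero (t₀ - 1) (t₀ + 1)
  exact ⟨s, eventually_of_mem (Icc_mem_nhds (by linarith) (by linarith)) fun t ht =>
    tsum_eq_sum (hs t ht)⟩

theorem HasCompactSupport.contDiff_periodization {n : WithTop ℕ∞} (hF : HasCompactSupport F)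
    (hd : ContDiff ℝ n F) : ContDiff ℝ n (periodization F) :=
  contDiff_iff_contDiffAt.2 fun t₀ => by
    obtain ⟨s, hs⟩ := hF.periodization_eventuallyEq_sum t₀
    exact (ContDiff.sum fun k _ => hd.comp (contDiff_id.add contDiff_const)).contDiffAt
      |>.congr_of_eventuallyEq hs

theorem HasCompactSupport.continuous_periodization (hF : HasCompactSupport F)
    (hc : Continuous F) : Continuous (periodization F) :=
  (hF.contDiff_periodization (n := 0) (contDiff_zero.2 hc)).continuous

theorem HasCompactSupport.intervalIntegral_periodization (hF : HasCompactSupport F)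
    (hc : Continuous F) : ∫ t in (0 : ℝ)..1, periodization F t = ∫ t, F t := by
  obtain ⟨s, hs⟩ := hF.exists_finset_comp_add_intCast_eq_zero 0 1
  have hsum : EqOn (periodization F) (fun t => ∑ k ∈ s, F (t + k)) (uIcc 0 1) := fun t ht =>
    tsum_eq_sum (hs t (by rwa [uIcc_of_le zero_le_one] at ht))
  rw [intervalIntegral.integral_congr hsum,
    intervalIntegral.integral_finsetSum (f := fun (k : ℤ) x => F (x + k)) fun k _ =>
      (hc.comp (continuous_add_const (k : ℝ))).intervalIntegrable 0 1,
    ← (hc.integrable_of_hasCompactSupport hF).hasSum_intervalIntegral_comp_add_int.tsum_eq]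
  refine (tsum_eq_sum fun k hk => ?_).symm
  rw [intervalIntegral.integral_congr (g := fun _ => 0) fun t ht =>
    hs t (by rwa [uIcc_of_le zero_le_one] at ht) k hk, intervalIntegral.integral_zero]

end CompactSupport

/-- `η > 0` keeps the square root smooth where all translates of `f` vanish. -/
noncomputable def periodicEnvelope (η : ℝ) (f : ℝ → ℝ) (t : ℝ) : ℝ :=
  √(η + periodization (fun x => f x ^ 2) t)

section PeriodicEnvelope

variable {f : ℝ → ℝ} {η : ℝ}

theorem periodicEnvelope_periodic (η : ℝ) (f : ℝ → ℝ) : Periodic (periodicEnvelope η f) 1 :=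
  fun t => by rw [periodicEnvelope, periodization_periodic _ t, periodicEnvelope]

theorem sq_periodicEnvelope (hη : 0 ≤ η) (t : ℝ) :
    periodicEnvelope η f t ^ 2 = η + periodization (fun x => f x ^ 2) t :=
  Real.sq_sqrt (add_nonneg hη (tsum_nonneg fun _ => sq_nonneg _))

theorem HasCompactSupport.contDiff_periodicEnvelope (hfs : HasCompactSupport f)
    (hf : ContDiff ℝ 1 f) (hη : 0 < η) : ContDiff ℝ 1 (periodicEnvelope η f) :=
  (contDiff_const.add (hfs.sq.contDiff_periodization (hf.pow 2))).sqrt fun _ =>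
    (add_pos_of_pos_of_nonneg hη (tsum_nonneg fun _ => sq_nonneg _)).ne'

theorem HasCompactSupport.sq_deriv_periodicEnvelope_le (hfs : HasCompactSupport f)
    (hf : Differentiable ℝ f) (hη : 0 < η) (t : ℝ) :
    deriv (periodicEnvelope η f) t ^ 2 ≤ periodization (fun x => deriv f x ^ 2) t := by
  obtain ⟨s, hs⟩ := hfs.sq.periodization_eventuallyEq_sum t
  have hloc : periodicEnvelope η f =ᶠ[𝓝 t] fun x => √(η + ∑ k ∈ s, f (x + k) ^ 2) :=
    hs.mono fun x hx => by rw [periodicEnvelope, hx]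
  rw [hloc.deriv_eq]
  calc _ ≤ ∑ k ∈ s, deriv (fun x => f (x + k)) t ^ 2 :=
        sq_deriv_sqrt_add_sum_sq_le s (a := fun (k : ℤ) x => f (x + k)) hη fun k _ =>
          (hf _).comp t (differentiableAt_id.add_const _)
    _ = ∑ k ∈ s, deriv f (t + k) ^ 2 := by simp only [deriv_comp_add_const]
    _ ≤ periodization (fun x => deriv f x ^ 2) t :=
        Summable.sum_le_tsum s (fun _ _ => sq_nonneg _)
          (hfs.deriv.sq.summable_comp_add_intCast t)

theorem HasCompactSupport.intervalIntegral_mul_sq_periodicEnvelope {K : ℝ → ℝ}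
    (hK : Continuous K) (hKper : Periodic K 1) (hfs : HasCompactSupport f) (hf : Continuous f)
    (hη : 0 ≤ η) :
    ∫ t in (0 : ℝ)..1, K t * periodicEnvelope η f t ^ 2 =
      η * (∫ t in (0 : ℝ)..1, K t) + ∫ t, K t * f t ^ 2 := by
  have hKf : HasCompactSupport fun x => K x * f x ^ 2 := hfs.sq.mul_left
  have hpoint : ∀ t, K t * periodicEnvelope η f t ^ 2 =
      η * K t + periodization (fun x => K x * f x ^ 2) t := fun t => by
    rw [sq_periodicEnvelope hη, mul_add, mul_comm, periodization, periodization, ← tsum_mul_left]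
    congr 1
    exact tsum_congr fun k => by rw [show K (t + k) = K t by simpa using hKper.int_mul k t]
  simp only [hpoint]
  have hKfc : Continuous fun x => K x * f x ^ 2 := by fun_prop
  rw [intervalIntegral.integral_add
      ((by fun_prop : Continuous fun t => η * K t).intervalIntegrable _ _)
      ((hKf.continuous_periodization hKfc).intervalIntegrable _ _),
    intervalIntegral.integral_const_mul, hKf.intervalIntegral_periodization hKfc]

end PeriodicEnvelope

theorem IsPeriodicStable.isLineStable {K : ℝ → ℝ} (hK : Continuous K) (hKper : Periodic K 1)
    (H : IsPeriodicStable K) : IsLineStable K := by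
  intro f hf hfs
  have hf' : Continuous fun x => deriv f x ^ 2 := (hf.continuous_deriv le_rfl).pow 2
  have hf's : HasCompactSupport fun x => deriv f x ^ 2 := hfs.deriv.sq
  refine le_of_forall_pos_add_mul_le (c := ∫ t in (0 : ℝ)..1, K t) fun η hη => ?_
  have hg := hfs.contDiff_periodicEnvelope hf hη
  calc (∫ t, K t * f t ^ 2) + η * ∫ t in (0 : ℝ)..1, K t
      = ∫ t in (0 : ℝ)..1, K t * periodicEnvelope η f t ^ 2 := by
        rw [hfs.intervalIntegral_mul_sq_periodicEnvelope hK hKper hf.continuous hη.le, add_comm]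
    _ ≤ ∫ t in (0 : ℝ)..1, deriv (periodicEnvelope η f) t ^ 2 :=
        H _ hg (periodicEnvelope_periodic η f)
    _ ≤ ∫ t in (0 : ℝ)..1, periodization (fun x => deriv f x ^ 2) t :=
        intervalIntegral.integral_mono zero_le_one
          (((hg.continuous_deriv le_rfl).pow 2).intervalIntegrable _ _)
          ((hf's.continuous_periodization hf').intervalIntegrable _ _)
          (hfs.sq_deriv_periodicEnvelope_le (hf.differentiable one_ne_zero) hη)
    _ = ∫ t, deriv f t ^ 2 := hf's.intervalIntegral_periodization hf'

theorem integral_eq_intervalIntegral_of_forall_notMem_Icc {F : ℝ → ℝ} {a b : ℝ} (hab : a ≤ b)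
    (h : ∀ t ∉ Icc a b, F t = 0) : ∫ t, F t = ∫ t in a..b, F t := by
  rw [intervalIntegral.integral_of_le hab, ← integral_Icc_eq_integral_Ioc,
    setIntegral_eq_integral_of_forall_compl_eq_zero h]

noncomputable def indexForm (K u : ℝ → ℝ) (a b : ℝ) : ℝ :=
  ∫ t in a..b, (deriv u t ^ 2 - K t * u t ^ 2)

section IndexForm

variable {K u v : ℝ → ℝ} {a b c : ℝ}

theorem continuous_indexForm_integrand (hK : Continuous K) (hu : ContDiff ℝ 1 u) :
    Continuous fun t => deriv u t ^ 2 - K t * u t ^ 2 :=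
  ((hu.continuous_deriv le_rfl).pow 2).sub (hK.mul (hu.continuous.pow 2))

theorem intervalIntegral_mul_sq_le_iff_indexForm_nonneg (hK : Continuous K)
    (hu : ContDiff ℝ 1 u) :
    (∫ t in a..b, K t * u t ^ 2) ≤ ∫ t in a..b, deriv u t ^ 2 ↔ 0 ≤ indexForm K u a b := by
  rw [indexForm, intervalIntegral.integral_sub (f := fun t => deriv u t ^ 2)
    (g := fun t => K t * u t ^ 2) (((hu.continuous_deriv le_rfl).pow 2).intervalIntegrable _ _)
    ((hK.mul (hu.continuous.pow 2)).intervalIntegrable _ _), sub_nonneg]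

theorem indexForm_add_indexForm (hK : Continuous K) (hu : ContDiff ℝ 1 u) :
    indexForm K u a b + indexForm K u b c = indexForm K u a c :=
  intervalIntegral.integral_add_adjacent_intervals
    ((continuous_indexForm_integrand hK hu).intervalIntegrable _ _)
    ((continuous_indexForm_integrand hK hu).intervalIntegrable _ _)

theorem indexForm_congr (hab : a ≤ b) (h : EqOn u v (Ioo a b)) :
    indexForm K u a b = indexForm K v a b :=
  intervalIntegral.integral_congr_Ioo_of_le hab fun t ht => by
    simp only [h ht, (h.eventuallyEq_of_mem (Ioo_mem_nhds ht.1 ht.2)).deriv_eq]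

theorem indexForm_comp_sub (hKper : Periodic K c) :
    indexForm K (fun t => u (t - c)) (a + c) (b + c) = indexForm K u a b := by
  simp only [indexForm, deriv_comp_sub_const]
  rw [← intervalIntegral.integral_comp_add_right]
  simp only [add_sub_cancel_right, hKper _]

theorem indexForm_zero_natCast (hK : Continuous K) (hKper : Periodic K 1) (hu : ContDiff ℝ 1 u)
    (hper : Periodic u 1) (n : ℕ) : indexForm K u 0 n = n * indexForm K u 0 1 := by
  have hF : Periodic (fun t => deriv u t ^ 2 - K t * u t ^ 2) 1 := fun t => by
    simp only [hper.deriv t, hKper t, hper t]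
  simpa [indexForm] using hF.intervalIntegral_add_zsmul_eq n 0 fun _ _ =>
    (continuous_indexForm_integrand hK hu).intervalIntegrable _ _

theorem IsLineStable.indexForm_nonneg (H : IsLineStable K) (hK : Continuous K)
    (hu : ContDiff ℝ 1 u) (hab : a ≤ b) (hsupp : tsupport u ⊆ Icc a b) :
    0 ≤ indexForm K u a b := by
  have hu0 : ∀ t ∉ Icc a b, u t = 0 := fun t ht =>
    image_eq_zero_of_notMem_tsupport fun h => ht (hsupp h)
  have hdu0 : ∀ t ∉ Icc a b, deriv u t = 0 := fun t ht =>
    notMem_support.1 fun h => ht (hsupp (support_deriv_subset h))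
  have hstable := H u hu (isCompact_Icc.of_isClosed_subset (isClosed_tsupport u) hsupp)
  rwa [integral_eq_intervalIntegral_of_forall_notMem_Icc hab fun t ht => by simp [hu0 t ht],
    integral_eq_intervalIntegral_of_forall_notMem_Icc hab fun t ht => by simp [hdu0 t ht],
    intervalIntegral_mul_sq_le_iff_indexForm_nonneg hK hu] at hstable

end IndexForm

noncomputable def cutoff (n t : ℝ) : ℝ := smoothTransition (t + 1) * smoothTransition (n + 1 - t)

section Cutoff

variable {n t : ℝ}

theorem contDiff_cutoff : ContDiff ℝ 1 (cutoff n) :=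
  (smoothTransition.contDiff.comp (contDiff_id.add contDiff_const)).mul
    (smoothTransition.contDiff.comp (contDiff_const.sub contDiff_id))

theorem tsupport_cutoff_subset : tsupport (cutoff n) ⊆ Icc (-1) (n + 1) := by
  refine closure_minimal (fun t ht => ?_) isClosed_Icc
  by_contra hout
  rcases not_and_or.1 hout with h | h
  · exact ht (by rw [cutoff, smoothTransition.zero_of_nonpos (by linarith), zero_mul])
  · exact ht (by rw [cutoff, smoothTransition.zero_of_nonpos (x := n + 1 - t) (by linarith),
      mul_zero])

theorem cutoff_of_le (ht : t ≤ n) : cutoff n t = smoothTransition (t + 1) := by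
  rw [cutoff, smoothTransition.one_of_one_le (x := n + 1 - t) (by linarith), mul_one]

theorem cutoff_of_nonneg (ht : 0 ≤ t) : cutoff n t = smoothTransition (n + 1 - t) := by
  rw [cutoff, smoothTransition.one_of_one_le (by linarith), one_mul]

end Cutoff

theorem indexForm_cutoff_mul {K f : ℝ → ℝ} (hK : Continuous K) (hKper : Periodic K 1)
    (hf : ContDiff ℝ 1 f) (hper : Periodic f 1) (n : ℕ) :
    indexForm K (fun t => cutoff n t * f t) (-1) (n + 1) =
      indexForm K (fun t => smoothTransition (t + 1) * f t) (-1) 0 + n * indexForm K f 0 1 +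
        indexForm K (fun t => smoothTransition (1 - t) * f t) 0 1 := by
  have hn : (0 : ℝ) ≤ n := n.cast_nonneg
  have hg : ContDiff ℝ 1 fun t => cutoff n t * f t := contDiff_cutoff.mul hf
  have hleft : EqOn (fun t => cutoff n t * f t) (fun t => smoothTransition (t + 1) * f t)
      (Ioo (-1) 0) := fun t ht => by simp only [cutoff_of_le (ht.2.le.trans hn)]
  have hmid : EqOn (fun t => cutoff n t * f t) f (Ioo 0 n) := fun t ht => by
    simp only [cutoff_of_le ht.2.le, one_mul,
      smoothTransition.one_of_one_le (by linarith [ht.1] : 1 ≤ t + 1)]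
  have hright : EqOn (fun t => cutoff n t * f t)
      (fun t => smoothTransition (1 - (t - n)) * f (t - n)) (Ioo n (n + 1)) := fun t ht => by
    have hft : f (t - n) = f t := by simpa using hper.sub_nat_mul_eq (x := t) n
    dsimp only
    rw [cutoff_of_nonneg (by linarith [ht.1]), hft, show 1 - (t - n) = n + 1 - t by ring]
  have hshift := indexForm_comp_sub (K := K) (u := fun t => smoothTransition (1 - t) * f t)
    (a := 0) (b := 1) (by simpa using hKper.nat_mul n)
  rw [zero_add, add_comm 1] at hshift
  rw [← indexForm_add_indexForm hK hg (b := n), ← indexForm_add_indexForm hK hg (b := 0),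
    indexForm_congr (by norm_num) hleft, indexForm_congr hn hmid,
    indexForm_zero_natCast hK hKper hf hper, indexForm_congr (by linarith) hright, hshift]

theorem IsLineStable.isPeriodicStable {K : ℝ → ℝ} (hK : Continuous K) (hKper : Periodic K 1)
    (H : IsLineStable K) : IsPeriodicStable K := by
  intro f hf hper
  rw [intervalIntegral_mul_sq_le_iff_indexForm_nonneg hK hf]
  refine nonneg_of_forall_nat_add_mul_nonneg
    (a := indexForm K (fun t => smoothTransition (t + 1) * f t) (-1) 0 +
      indexForm K (fun t => smoothTransition (1 - t) * f t) 0 1) fun n => ?_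
  have hcut := H.indexForm_nonneg hK (contDiff_cutoff.mul hf) (by linarith [n.cast_nonneg (α := ℝ)])
    (tsupport_mul_subset_left.trans tsupport_cutoff_subset)
  rw [indexForm_cutoff_mul hK hKper hf hper] at hcut
  linarith

/-- A closed geodesic is stable iff its universal cover is stable. -/
theorem stmt1 (K : ℝ → ℝ) (hK : Continuous K) (hper : ∀ t, K (t + 1) = K t) :
    (∀ f : ℝ → ℝ, ContDiff ℝ 1 f → (∀ t, f (t + 1) = f t) →
        (∫ t in (0:ℝ)..1, K t * (f t) ^ 2) ≤ ∫ t in (0:ℝ)..1, (deriv f t) ^ 2) ↔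
    (∀ f : ℝ → ℝ, ContDiff ℝ 1 f → HasCompactSupport f →
        (∫ t, K t * (f t) ^ 2) ≤ ∫ t, (deriv f t) ^ 2) :=
  ⟨IsPeriodicStable.isLineStable hK hper, IsLineStable.isPeriodicStable hK hper⟩
end

section
/- Let K : ℝ → ℝ be continuous with K(t+1) = K(t) for all t, and let M be the linear Poincaré map, i.e. the 2×2 real matrix such that every solution u of u'' + K u = 0 satisfies (u(t+1), u'(t+1)) = M · (u(t), u'(t)). If M has no positive real eigenvalue, then every solution u that is not identically zero has infinitely many zeros: for every T ∈ ℝ there exists t > T with u(t) = 0. In particular there is a Jacobi field with at least two zeros. -/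
/-!
If a Jacobi field `u` had no zero after time `T`, say `u > 0` there, the Riccati variable
`r = u' / u` would solve `r' = -K - r²` on `(T, ∞)`. As `K` is bounded by some `C`, any stretch
where `|r| ≥ C + 1` is short (`1 / r` grows with slope `≥ 1 / 2`), so `r` is eventually bounded.
The Poincaré map sends `(1, r t)` to `u (t + 1) / u t • (1, r (t + 1))`; hence `r (t + 1) = r t`
is impossible, `r (t + 1) - r t` has a constant sign, and `r (s + n)` is monotone and bounded.
Its limit `L` yields the eigenvector `(1, L)`, with eigenvalue the limit of the factors
`u (t + 1) / u t ≥ exp (-(C + 1))`.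
-/

open Set Filter Topology Matrix

theorem IsPreconnected.forall_pos_or_forall_neg {α : Type*} [TopologicalSpace α] {s : Set α}
    {f : α → ℝ} (hs : IsPreconnected s) (hf : ContinuousOn f s) (hf0 : ∀ x ∈ s, f x ≠ 0) :
    (∀ x ∈ s, 0 < f x) ∨ (∀ x ∈ s, f x < 0) := by
  by_contra! ⟨⟨a, ha, hfa⟩, ⟨b, hb, hfb⟩⟩
  obtain ⟨c, hc, hfc⟩ := hs.intermediate_value ha hb hf ⟨hfa, hfb⟩
  exact hf0 c hc hfc

theorem mul_sub_le_sub_of_le_hasDerivAt {f f' : ℝ → ℝ} {a b C : ℝ} (hab : a ≤ b)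
    (hf : ∀ x ∈ Icc a b, HasDerivAt f (f' x) x) (hC : ∀ x ∈ Icc a b, C ≤ f' x) :
    C * (b - a) ≤ f b - f a := by
  rcases hab.eq_or_lt with rfl | hab
  · simp
  obtain ⟨c, hc, hfc⟩ := exists_hasDerivAt_eq_slope f f' hab
    (fun x hx => (hf x hx).continuousAt.continuousWithinAt)
    (fun x hx => hf x (Ioo_subset_Icc_self hx))
  have := hC c (Ioo_subset_Icc_self hc)
  rw [hfc, le_div_iff₀ (sub_pos.2 hab)] at this
  exact this

theorem Matrix.exists_pos_eigenvalue_of_tendsto {ι : Type*} [Fintype ι] (M : Matrix ι ι ℝ)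
    (i : ι) {w : ℕ → ι → ℝ} {v : ι → ℝ} {c : ℕ → ℝ} {δ : ℝ} (hw : Tendsto w atTop (𝓝 v))
    (hwi : ∀ n, w n i = 1) (hstep : ∀ n, M *ᵥ w n = c n • w (n + 1)) (hδ : 0 < δ)
    (hc : ∀ n, δ ≤ c n) : ∃ lam : ℝ, 0 < lam ∧ v ≠ 0 ∧ M *ᵥ v = lam • v := by
  have hMw : Tendsto (fun n => M *ᵥ w n) atTop (𝓝 (M *ᵥ v)) :=
    (M.mulVecLin.continuous_of_finiteDimensional.tendsto v).comp hw
  have hc_eq : c = fun n => (M *ᵥ w n) i := by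
    ext n
    simp [hstep n, hwi]
  have hc_lim : Tendsto c atTop (𝓝 ((M *ᵥ v) i)) :=
    hc_eq ▸ ((continuous_apply i).tendsto _).comp hMw
  have hvi : v i = 1 :=
    tendsto_nhds_unique (((continuous_apply i).tendsto v).comp hw)
      (by simp [Function.comp_def, hwi])
  refine ⟨(M *ᵥ v) i, hδ.trans_le (ge_of_tendsto' hc_lim hc), fun h => by simp [h] at hvi, ?_⟩
  refine tendsto_nhds_unique hMw ?_
  simp_rw [hstep]
  exact hc_lim.smul (hw.comp (tendsto_add_atTop_nat 1))

section Riccati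

variable {K r : ℝ → ℝ} {C T : ℝ}

theorem riccati_le_of_le (hK : ∀ t, |K t| ≤ C)
    (hr : ∀ t, T < t → HasDerivAt r (-K t - r t ^ 2) t) {c a : ℝ} (hc : C < c ^ 2)
    (ha : T < a) (hra : r a ≤ c) : ∀ t, a ≤ t → r t ≤ c := by
  intro t hat
  have hr' : ∀ x ∈ Icc a t, HasDerivAt r (-K x - r x ^ 2) x := fun x hx => hr x (ha.trans_le hx.1)
  refine image_le_of_deriv_right_lt_deriv_boundary' (f' := fun x => -K x - r x ^ 2)
    (fun x hx => (hr' x hx).continuousAt.continuousWithinAt)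
    (fun x hx => (hr' x (Ico_subset_Icc_self hx)).hasDerivWithinAt) hra continuousOn_const
    (fun x _ => hasDerivWithinAt_const x _ c) ?_ ⟨hat, le_rfl⟩
  intro x _ hx
  have := (abs_le.1 (hK x)).1
  simp only [hx]
  linarith

theorem riccati_not_forall_le_abs (hK : ∀ t, |K t| ≤ C)
    (hr : ∀ t, T < t → HasDerivAt r (-K t - r t ^ 2) t) {a : ℝ} (ha : T < a) :
    ¬ ∀ s ∈ Icc a (a + 5), C + 1 ≤ |r s| := by
  intro hbig
  have hC : 0 ≤ C := (abs_nonneg _).trans (hK 0)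
  have hr0 : ∀ s ∈ Icc a (a + 5), r s ≠ 0 := fun s hs h => by
    have := hbig s hs
    rw [h, abs_zero] at this
    linarith
  -- `1 / r` grows with slope at least `1 / 2` but stays in `[-1, 1]`
  have hinv : ∀ s ∈ Icc a (a + 5),
      HasDerivAt (fun x => (r x)⁻¹) (-(-K s - r s ^ 2) / r s ^ 2) s :=
    fun s hs => (hr s (ha.trans_le hs.1)).inv (hr0 s hs)
  have hslope : ∀ s ∈ Icc a (a + 5), (1 : ℝ) / 2 ≤ -(-K s - r s ^ 2) / r s ^ 2 := by
    intro s hs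
    have hsq : (C + 1) ^ 2 ≤ r s ^ 2 := by
      simpa [sq_abs] using pow_le_pow_left₀ (by linarith) (hbig s hs) 2
    have := hr0 s hs
    rw [le_div_iff₀ (by positivity)]
    nlinarith [(abs_le.1 (hK s)).1]
  have hbound : ∀ s ∈ Icc a (a + 5), |(r s)⁻¹| ≤ 1 := fun s hs => by
    rw [abs_inv]
    exact inv_le_one_of_one_le₀ (by linarith [hbig s hs])
  have := mul_sub_le_sub_of_le_hasDerivAt (by linarith) hinv hslope
  have h₁ := abs_le.1 (hbound a (left_mem_Icc.2 (by linarith)))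
  have h₂ := abs_le.1 (hbound (a + 5) (right_mem_Icc.2 (by linarith)))
  linarith

theorem riccati_eventually_abs_le (hK : ∀ t, |K t| ≤ C)
    (hr : ∀ t, T < t → HasDerivAt r (-K t - r t ^ 2) t) :
    ∃ s₀, T < s₀ ∧ ∀ t, s₀ ≤ t → |r t| ≤ C + 1 := by
  have hC : 0 ≤ C := (abs_nonneg _).trans (hK 0)
  have hlevel : C < (C + 1) ^ 2 := by nlinarith
  have hlow : ∀ t, T < t → -(C + 1) ≤ r t := by
    intro t ht
    by_contra! hlt
    refine riccati_not_forall_le_abs hK hr ht fun s hs => ?_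
    have := riccati_le_of_le hK hr (c := -(C + 1)) (by rwa [neg_sq]) ht hlt.le s hs.1
    rw [abs_of_neg (by linarith)]
    linarith
  obtain ⟨s₀, hs₀, hrs₀⟩ : ∃ s₀ ∈ Icc (T + 1) (T + 1 + 5), |r s₀| < C + 1 := by
    by_contra! hbig
    exact riccati_not_forall_le_abs hK hr (by linarith) hbig
  have hTs₀ : T < s₀ := by linarith [hs₀.1]
  refine ⟨s₀, hTs₀, fun t ht => abs_le.2 ⟨hlow t (hTs₀.trans_le ht), ?_⟩⟩
  exact riccati_le_of_le hK hr hlevel hTs₀ (abs_lt.1 hrs₀).2.le t ht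

end Riccati

theorem exists_tendsto_of_abs_le_of_monotone_or_antitone {x : ℕ → ℝ} {B : ℝ}
    (hB : ∀ n, |x n| ≤ B) (hx : Monotone x ∨ Antitone x) : ∃ L, Tendsto x atTop (𝓝 L) := by
  rcases hx with hx | hx
  · exact ⟨_, tendsto_atTop_ciSup hx ⟨B, forall_mem_range.2 fun n => (le_abs_self _).trans (hB n)⟩⟩
  · exact ⟨_, tendsto_atTop_ciInf hx ⟨-B, forall_mem_range.2 fun n => neg_le_of_abs_le (hB n)⟩⟩

-- `r (· + 1) - r` is continuous and never zero, so `n ↦ r (s₀ + n)` is monotone.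
theorem exists_tendsto_add_natCast_of_shift_ne {r : ℝ → ℝ} {T s₀ B : ℝ}
    (hr : ContinuousOn r (Ioi T)) (hne : ∀ t, T < t → r (t + 1) ≠ r t) (hTs₀ : T < s₀)
    (hB : ∀ t, s₀ ≤ t → |r t| ≤ B) : ∃ L, Tendsto (fun n : ℕ => r (s₀ + n)) atTop (𝓝 L) := by
  have hshift : ContinuousOn (fun t => r (t + 1)) (Ioi T) :=
    hr.comp (continuous_add_const 1).continuousOn fun t (ht : T < t) => show T < t + 1 by linarith
  have hsign : (∀ t ∈ Ioi T, 0 < r (t + 1) - r t) ∨ (∀ t ∈ Ioi T, r (t + 1) - r t < 0) :=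
    isPreconnected_Ioi.forall_pos_or_forall_neg (hshift.sub hr)
      fun t ht => sub_ne_zero.2 (hne t ht)
  have hstep : ∀ n : ℕ, r (s₀ + ↑(n + 1)) = r ((s₀ + n) + 1) :=
    fun n => by rw [Nat.cast_succ, add_assoc]
  have hs₀n : ∀ n : ℕ, s₀ ≤ s₀ + n := fun n => le_add_of_nonneg_right n.cast_nonneg
  refine exists_tendsto_of_abs_le_of_monotone_or_antitone (fun n => hB _ (hs₀n n))
    (hsign.imp (fun h => monotone_nat_of_le_succ fun n => ?_)
      fun h => antitone_nat_of_succ_le fun n => ?_)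
  · linarith [hstep n, h _ (hTs₀.trans_le (hs₀n n))]
  · linarith [hstep n, h _ (hTs₀.trans_le (hs₀n n))]

section Jacobi

variable {K u u' : ℝ → ℝ}

theorem hasDerivAt_div_riccati (hu : ∀ t, HasDerivAt u (u' t) t)
    (hu' : ∀ t, HasDerivAt u' (-(K t * u t)) t) {t : ℝ} (ht : u t ≠ 0) :
    HasDerivAt (fun s => u' s / u s) (-K t - (u' t / u t) ^ 2) t := by
  refine ((hu' t).div (hu t) ht).congr_deriv ?_
  field_simp

theorem mulVec_vecCons_one_div {M : Matrix (Fin 2) (Fin 2) ℝ}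
    (hM : ∀ t, ![u (t + 1), u' (t + 1)] = M *ᵥ ![u t, u' t]) {t : ℝ} (ht : u t ≠ 0)
    (ht₁ : u (t + 1) ≠ 0) :
    M *ᵥ ![1, u' t / u t] = (u (t + 1) / u t) • ![1, u' (t + 1) / u (t + 1)] := by
  have hnorm : ![1, u' t / u t] = (u t)⁻¹ • ![u t, u' t] := by
    ext i
    fin_cases i <;> simp <;> field_simp
  rw [hnorm, mulVec_smul, ← hM]
  ext i
  fin_cases i <;> simp <;> field_simp

theorem exp_neg_mul_le_div (hu : ∀ t, HasDerivAt u (u' t) t) {a b B : ℝ} (hab : a ≤ b)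
    (hpos : ∀ s ∈ Icc a b, 0 < u s) (hr : ∀ s ∈ Icc a b, -B ≤ u' s / u s) :
    Real.exp (-(B * (b - a))) ≤ u b / u a := by
  have hlog : ∀ s ∈ Icc a b, HasDerivAt (fun x => Real.log (u x)) (u' s / u s) s :=
    fun s hs => (hu s).log (hpos s hs).ne'
  have := mul_sub_le_sub_of_le_hasDerivAt hab hlog hr
  rw [← Real.exp_log (div_pos (hpos b (right_mem_Icc.2 hab)) (hpos a (left_mem_Icc.2 hab))),
    Real.log_div (hpos b (right_mem_Icc.2 hab)).ne' (hpos a (left_mem_Icc.2 hab)).ne']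
  exact Real.exp_le_exp.2 (by linarith)

theorem exists_pos_eigenvalue_of_eventually_pos {M : Matrix (Fin 2) (Fin 2) ℝ} {C T : ℝ}
    (hK : ∀ t, |K t| ≤ C) (hu : ∀ t, HasDerivAt u (u' t) t)
    (hu' : ∀ t, HasDerivAt u' (-(K t * u t)) t)
    (hM : ∀ t, ![u (t + 1), u' (t + 1)] = M *ᵥ ![u t, u' t]) (hpos : ∀ t, T < t → 0 < u t) :
    ∃ (lam : ℝ) (v : Fin 2 → ℝ), 0 < lam ∧ v ≠ 0 ∧ M *ᵥ v = lam • v := by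
  by_contra! hno
  set r := fun t => u' t / u t
  have hr : ∀ t, T < t → HasDerivAt r (-K t - r t ^ 2) t :=
    fun t ht => hasDerivAt_div_riccati hu hu' (hpos t ht).ne'
  have hstep : ∀ t, T < t → M *ᵥ ![1, r t] = (u (t + 1) / u t) • ![1, r (t + 1)] :=
    fun t ht => mulVec_vecCons_one_div hM (hpos t ht).ne' (hpos _ (by linarith)).ne'
  have hne : ∀ t, T < t → r (t + 1) ≠ r t := fun t ht hrt =>
    hno _ ![1, r t] (div_pos (hpos (t + 1) (by linarith)) (hpos t ht)) (by simp)
      (by rw [hstep t ht, hrt])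
  obtain ⟨s₀, hTs₀, hbdd⟩ := riccati_eventually_abs_le hK hr
  obtain ⟨L, hL⟩ := exists_tendsto_add_natCast_of_shift_ne
    (fun t ht => (hr t ht).continuousAt.continuousWithinAt) hne hTs₀ hbdd
  have hs₀n : ∀ n : ℕ, T < s₀ + n := fun n => by linarith [n.cast_nonneg (α := ℝ)]
  obtain ⟨lam, hlam, hv, hMv⟩ := M.exists_pos_eigenvalue_of_tendsto 0
    (w := fun n => ![1, r (s₀ + n)]) (c := fun n => u (s₀ + n + 1) / u (s₀ + n))
    (((by fun_prop : Continuous fun x : ℝ => ![1, x]).tendsto L).comp hL) (fun n => rfl)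
    (fun n => by simp only [Nat.cast_succ, ← add_assoc, hstep _ (hs₀n n)])
    (Real.exp_pos (-(C + 1)))
    (fun n => by
      simpa using exp_neg_mul_le_div hu (le_add_of_nonneg_right zero_le_one)
        (fun s hs => hpos s ((hs₀n n).trans_le hs.1))
        (fun s hs => neg_le_of_abs_le (hbdd s (by linarith [hs.1, n.cast_nonneg (α := ℝ)]))))
  exact hno lam _ hlam hv hMv

end Jacobi

/-- If the linear Poincaré map of a closed geodesic has no positive real eigenvalue,
then every nontrivial Jacobi field has infinitely many zeros. -/
theorem stmt5 (K : ℝ → ℝ) (hK : Continuous K) (hper : ∀ t, K (t + 1) = K t)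
    (M : Matrix (Fin 2) (Fin 2) ℝ)
    (hM : ∀ u : ℝ → ℝ, ContDiff ℝ 2 u → (∀ t, deriv (deriv u) t + K t * u t = 0) →
      ∀ t, ![u (t + 1), deriv u (t + 1)] = M.mulVec ![u t, deriv u t])
    (heig : ¬ ∃ (lam : ℝ) (v : Fin 2 → ℝ), 0 < lam ∧ v ≠ 0 ∧ M.mulVec v = lam • v) :
    ∀ u : ℝ → ℝ, ContDiff ℝ 2 u → (∀ t, deriv (deriv u) t + K t * u t = 0) →
      u ≠ 0 → ∀ T : ℝ, ∃ t > T, u t = 0 := by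
  intro u hu hode _ T
  by_contra! hzero
  obtain ⟨C, hC⟩ := isBounded_iff_forall_norm_le.1
    ((show Function.Periodic K 1 from hper).isBounded_of_continuous one_ne_zero hK)
  have hKC : ∀ t, |K t| ≤ C := fun t => hC _ (mem_range_self t)
  have hu₁ : ∀ t, HasDerivAt u (deriv u t) t :=
    fun t => (hu.differentiable (by norm_num) t).hasDerivAt
  have hu₂ : ∀ t, HasDerivAt (deriv u) (-(K t * u t)) t := fun t => by
    rw [← eq_neg_of_add_eq_zero_left (hode t)]
    exact ((hu.iterate_deriv' 1 1).differentiable (by norm_num) t).hasDerivAt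
  rcases isPreconnected_Ioi.forall_pos_or_forall_neg hu.continuous.continuousOn hzero
    with hpos | hneg
  · exact heig (exists_pos_eigenvalue_of_eventually_pos hKC hu₁ hu₂ (hM u hu hode) hpos)
  · refine heig (exists_pos_eigenvalue_of_eventually_pos (u := -u) (u' := -deriv u) hKC
      (fun t => (hu₁ t).neg) (fun t => by simpa using (hu₂ t).neg) (fun t => ?_)
      fun t ht => neg_pos.2 (hneg t ht))
    have h := congrArg Neg.neg (hM u hu hode t)
    rw [← mulVec_neg] at h
    simpa using h
end

section
/- Let K : ℝ → ℝ be continuous with K(t+1) = K(t) for all t, and suppose the closed geodesic is strictly stable: there exists δ > 0 such that every 1-periodic C¹ function f : ℝ → ℝ satisfies ∫₀¹ (f')² − ∫₀¹ K f² ≥ δ ∫₀¹ f². Then the linear Poincaré map M (the 2×2 matrix with (u(t+1), u'(t+1)) = M · (u(t), u'(t)) for all solutions u of u'' + K u = 0) has two real eigenvalues λ and 1/λ with 0 < λ < 1; in particular M is hyperbolic and has a basis of eigenvectors. -/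
/-!
Deform the curvature to `K + μ` and let `Δ μ` be the trace of the monodromy of
`u'' + (K + μ) u = 0`; by Grönwall's inequality `Δ` is continuous. For `μ ≤ -max |K|` the
curvature is nonpositive, so `u u'` is nondecreasing and the Jacobi fields with data `(1, 0)` and
`(0, 1)` give `Δ μ ≥ 2`. If `Δ 0 ≤ 2`, the intermediate value theorem yields `μ ≤ 0` with
`Δ μ = 2`. The monodromy has determinant `1` (constancy of the Wronskian), so it then fixes a
nonzero vector, which is the initial data of a nonzero periodic Jacobi field `u` of `K + μ`.
Integrating by parts, the index form of `u` is `μ ∫ u² ≤ 0 < δ ∫ u²`, contradicting strict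
stability. Hence the trace exceeds `2`, and a `2 × 2` matrix of determinant `1` and trace `> 2`
has eigenvalues `λ` and `λ⁻¹` with `0 < λ < 1`.
-/

open Set Filter Topology
open scoped NNReal

lemma Function.Periodic.exists_abs_le {K : ℝ → ℝ} {T : ℝ} (hper : Function.Periodic K T)
    (hT : T ≠ 0) (hK : Continuous K) : ∃ C, ∀ t, |K t| ≤ C := by
  obtain ⟨C, hC⟩ := isBounded_iff_forall_norm_le.mp (hper.isBounded_of_continuous hT hK)
  exact ⟨C, fun t => hC _ (mem_range_self t)⟩

lemma Matrix.det_fin_two_sub_smul_one {R : Type*} [CommRing R] (M : Matrix (Fin 2) (Fin 2) R)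
    (c : R) : (M - c • 1).det = c ^ 2 - M.trace * c + M.det := by
  simp [Matrix.det_fin_two, Matrix.trace_fin_two]
  ring

lemma Matrix.exists_mulVec_eq_smul_of_sq_sub {K : Type*} [Field K] (M : Matrix (Fin 2) (Fin 2) K)
    {c : K} (hc : c ^ 2 - M.trace * c + M.det = 0) : ∃ v ≠ 0, M.mulVec v = c • v := by
  obtain ⟨v, hv, hMv⟩ :=
    Matrix.exists_mulVec_eq_zero_iff.mpr ((M.det_fin_two_sub_smul_one c).trans hc)
  refine ⟨v, hv, ?_⟩
  rwa [Matrix.sub_mulVec, Matrix.smul_mulVec, Matrix.one_mulVec, sub_eq_zero] at hMv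

lemma Matrix.exists_eigenvalues_of_det_eq_one_of_two_lt_trace (M : Matrix (Fin 2) (Fin 2) ℝ)
    (hdet : M.det = 1) (htr : 2 < M.trace) :
    ∃ lam : ℝ, 0 < lam ∧ lam < 1 ∧ (∃ v ≠ 0, M.mulVec v = lam • v) ∧
      (∃ w ≠ 0, M.mulVec w = lam⁻¹ • w) := by
  set D := M.trace
  set r := √(D ^ 2 - 4)
  have hr : r ^ 2 = D ^ 2 - 4 := Real.sq_sqrt (by nlinarith)
  have hr0 : 0 ≤ r := Real.sqrt_nonneg _
  have hrD : r < D := by nlinarith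
  have hinv : ((D - r) / 2)⁻¹ = (D + r) / 2 :=
    inv_eq_of_mul_eq_one_right (by linear_combination -hr / 4)
  refine ⟨(D - r) / 2, by linarith, by nlinarith, M.exists_mulVec_eq_smul_of_sq_sub ?_,
    hinv ▸ M.exists_mulVec_eq_smul_of_sq_sub ?_⟩
  · rw [hdet]; linear_combination hr / 4
  · rw [hdet]; linear_combination hr / 4

lemma one_le_of_forall_one_le_sq {f : ℝ → ℝ} {a b : ℝ} (hab : a ≤ b)
    (hf : ContinuousOn f (Icc a b)) (ha : 0 < f a) (h : ∀ t ∈ Icc a b, 1 ≤ f t ^ 2) : 1 ≤ f b := by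
  by_contra! hb
  have hb' : f b < 0 := by nlinarith [h b ⟨hab, le_rfl⟩]
  obtain ⟨t, ht, hft⟩ := intermediate_value_Icc' hab hf ⟨hb'.le, ha.le⟩
  have := h t ht
  norm_num [hft] at this

section IntegralCurves

variable {E : Type*} [NormedAddCommGroup E] [NormedSpace ℝ E] {v : ℝ → E → E} {γ γ' : ℝ → E}

lemma IsIntegralCurveOn.congr {s : Set ℝ} (hγ : IsIntegralCurveOn γ v s) (h : EqOn γ' γ s) :
    IsIntegralCurveOn γ' v s := fun t ht => by
  simpa only [h ht] using (hγ t ht).congr h (h ht)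

lemma IsIntegralCurveOn.union_of_isClosed {s s' : Set ℝ} (hs : IsIntegralCurveOn γ v s)
    (hs' : IsIntegralCurveOn γ v s') (hsc : IsClosed s) (hsc' : IsClosed s') :
    IsIntegralCurveOn γ v (s ∪ s') := by
  have outside {u : Set ℝ} (hu : IsClosed u) {t : ℝ} (ht : t ∉ u) :
      HasDerivWithinAt γ (v t (γ t)) u t :=
    HasFDerivWithinAt.of_notMem_closure (by rwa [hu.closure_eq])
  intro t ht
  by_cases h : t ∈ s <;> by_cases h' : t ∈ s'
  · exact (hs t h).union (hs' t h')
  · exact (hs t h).union (outside hsc' h')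
  · exact (outside hsc h).union (hs' t h')
  · exact absurd ht (by simp [h, h'])

lemma IsIntegralCurveOn.exists_glue_Icc {a b c : ℝ} (hγ : IsIntegralCurveOn γ v (Icc a b))
    (hγ' : IsIntegralCurveOn γ' v (Icc b c)) (hb : γ b = γ' b) (hab : a ≤ b) (hbc : b ≤ c) :
    ∃ γ'' : ℝ → E, EqOn γ'' γ (Iic b) ∧ EqOn γ'' γ' (Ici b) ∧
      IsIntegralCurveOn γ'' v (Icc a c) := by
  have left : EqOn (fun t => if t ≤ b then γ t else γ' t) γ (Iic b) := fun t ht => if_pos ht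
  have right : EqOn (fun t => if t ≤ b then γ t else γ' t) γ' (Ici b) := fun t ht => by
    by_cases h : t ≤ b
    · simp [le_antisymm h ht, hb]
    · simp [h]
  refine ⟨_, left, right, ?_⟩
  rw [← Icc_union_Icc_eq_Icc hab hbc]
  exact (hγ.congr (left.mono fun t ht => ht.2)).union_of_isClosed
    (hγ'.congr (right.mono fun t ht => ht.1)) isClosed_Icc isClosed_Icc

lemma exists_isIntegralCurveOn_Icc_of_forall {h : ℝ} (hh : 0 ≤ h)
    (hloc : ∀ t₀ x₀, ∃ γ : ℝ → E, γ t₀ = x₀ ∧ IsIntegralCurveOn γ v (Icc (t₀ - h) (t₀ + h)))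
    (x₀ : E) (n : ℕ) :
    ∃ γ : ℝ → E, γ 0 = x₀ ∧ IsIntegralCurveOn γ v (Icc (-(n * h)) (n * h)) := by
  induction n with
  | zero =>
    obtain ⟨γ, hγ0, hγ⟩ := hloc 0 x₀
    exact ⟨γ, hγ0, hγ.mono (Icc_subset_Icc (by simpa using hh) (by simpa using hh))⟩
  | succ n ih =>
    obtain ⟨γ, hγ0, hγ⟩ := ih
    have hnh : 0 ≤ n * h := by positivity
    obtain ⟨γr, hγr0, hγr⟩ := hloc (n * h) (γ (n * h))
    obtain ⟨γ₁, hγ₁l, -, hγ₁⟩ := hγ.exists_glue_Icc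
      (hγr.mono (Icc_subset_Icc (by linarith) le_rfl)) hγr0.symm (by linarith) (by linarith)
    obtain ⟨γl, hγl0, hγl⟩ := hloc (-(n * h)) (γ₁ (-(n * h)))
    obtain ⟨γ₂, -, hγ₂r, hγ₂⟩ := (hγl.mono (Icc_subset_Icc le_rfl (by linarith))).exists_glue_Icc
      hγ₁ hγl0 (by linarith) (by linarith)
    refine ⟨γ₂, ?_, hγ₂.mono (Icc_subset_Icc (by push_cast; linarith) (by push_cast; linarith))⟩
    rw [hγ₂r (by simpa using hnh), hγ₁l (by simpa using hnh), hγ0]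

lemma exists_isIntegralCurve_of_forall {K : ℝ≥0} (hv : ∀ t, LipschitzWith K (v t)) {h : ℝ}
    (hh : 0 < h)
    (hloc : ∀ t₀ x₀, ∃ γ : ℝ → E, γ t₀ = x₀ ∧ IsIntegralCurveOn γ v (Icc (t₀ - h) (t₀ + h)))
    (x₀ : E) : ∃ γ : ℝ → E, γ 0 = x₀ ∧ IsIntegralCurve γ v := by
  choose X hX0 hX using exists_isIntegralCurveOn_Icc_of_forall hh.le hloc x₀
  have hderiv (n : ℕ) (t : ℝ) (ht : |t| < n * h) : HasDerivAt (X n) (v t (X n t)) t :=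
    (hX n t (Ioo_subset_Icc_self (abs_lt.mp ht))).hasDerivAt
      (Icc_mem_nhds (abs_lt.mp ht).1 (abs_lt.mp ht).2)
  have hagree (m n : ℕ) (t : ℝ) (ht : |t| < min (m : ℝ) n * h) : X m t = X n t := by
    have hm : min (m : ℝ) n * h ≤ m * h := by gcongr; exact min_le_left _ _
    have hn : min (m : ℝ) n * h ≤ n * h := by gcongr; exact min_le_right _ _
    have h0 : 0 < min (m : ℝ) n * h := (abs_nonneg t).trans_lt ht
    refine ODE_solution_unique_of_mem_Ioo (s := fun _ => univ) (fun t _ => (hv t).lipschitzOnWith)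
      (t₀ := 0) ⟨by linarith, h0⟩ (fun s hs => ⟨hderiv m s ?_, trivial⟩)
      (fun s hs => ⟨hderiv n s ?_, trivial⟩) (by rw [hX0, hX0]) (abs_lt.mp ht)
    · exact (abs_lt.mpr hs).trans_le hm
    · exact (abs_lt.mpr hs).trans_le hn
  set N : ℝ → ℕ := fun t => ⌊|t| / h⌋₊ + 1
  have hN (t : ℝ) : |t| < N t * h := by
    have := Nat.lt_floor_add_one (|t| / h)
    rw [div_lt_iff₀ hh] at this
    simpa [N] using this
  refine ⟨fun t => X (N t) t, by simp [N, hX0], fun t => ?_⟩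
  have hnear : ∀ᶠ s in 𝓝 t, X (N s) s = X (N t) s := by
    filter_upwards [(continuous_abs.tendsto t).eventually (gt_mem_nhds (hN t))] with s hs
    exact hagree _ _ s (by simpa [min_mul_of_nonneg _ _ hh.le] using lt_min (hN s) hs)
  exact (hderiv (N t) t (hN t)).congr_of_eventuallyEq hnear

lemma exists_isIntegralCurveOn_Icc_linear [CompleteSpace E] {A : ℝ → E →L[ℝ] E} {L : ℝ≥0}
    (hA : Continuous A) (hL : ∀ t, ‖A t‖₊ ≤ L) (t₀ : ℝ) (x₀ : E) :
    ∃ γ : ℝ → E, γ t₀ = x₀ ∧ IsIntegralCurveOn γ (fun t x => A t x)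
      (Icc (t₀ - (2 * (L + 1) : ℝ)⁻¹) (t₀ + (2 * (L + 1) : ℝ)⁻¹)) := by
  set h : ℝ := (2 * (L + 1) : ℝ)⁻¹
  have hh : 0 < h := by positivity
  have hPL : IsPicardLindelof (fun t x => A t x) (tmin := t₀ - h) (tmax := t₀ + h)
      ⟨t₀, by constructor <;> linarith⟩ x₀ (‖x₀‖₊ + 1) 0 ((L + 1) * (2 * ‖x₀‖₊ + 1)) L := by
    refine ⟨fun t _ => ((A t).lipschitz.weaken (hL t)).lipschitzOnWith,
      fun x _ => (hA.clm_apply continuous_const).continuousOn, fun t _ x hx => ?_, ?_⟩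
    · have hx' : ‖x‖ ≤ 2 * ‖x₀‖ + 1 := by
        have := norm_le_norm_add_norm_sub' x x₀
        rw [Metric.mem_closedBall, dist_eq_norm] at hx
        push_cast at hx
        linarith
      calc ‖A t x‖ ≤ ‖A t‖ * ‖x‖ := (A t).le_opNorm x
        _ ≤ (L + 1) * (2 * ‖x₀‖ + 1) := by
          gcongr
          · exact (NNReal.coe_le_coe.mpr (hL t)).trans (by simp)
        _ = _ := by push_cast; ring
    · have : max (t₀ + h - t₀) (t₀ - (t₀ - h)) = h := by simp
      simp only [this, h]
      push_cast
      field_simp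
      linarith [norm_nonneg x₀]
  exact hPL.exists_eq_forall_mem_Icc_hasDerivWithinAt₀

lemma exists_isIntegralCurve_linear [CompleteSpace E] {A : ℝ → E →L[ℝ] E} {L : ℝ≥0}
    (hA : Continuous A) (hL : ∀ t, ‖A t‖₊ ≤ L) (x₀ : E) :
    ∃ γ : ℝ → E, γ 0 = x₀ ∧ IsIntegralCurve γ (fun t x => A t x) :=
  exists_isIntegralCurve_of_forall (fun t => (A t).lipschitz.weaken (hL t)) (by positivity)
    (exists_isIntegralCurveOn_Icc_linear hA hL) x₀

end IntegralCurves

def jacobiOperator (c : ℝ) : ℝ × ℝ →L[ℝ] ℝ × ℝ :=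
  (ContinuousLinearMap.snd ℝ ℝ ℝ).prod (-c • ContinuousLinearMap.fst ℝ ℝ ℝ)

@[simp]
lemma jacobiOperator_apply (c : ℝ) (p : ℝ × ℝ) : jacobiOperator c p = (p.2, -(c * p.1)) := by
  simp [jacobiOperator]

lemma continuous_jacobiOperator : Continuous jacobiOperator :=
  (ContinuousLinearMap.prodₗᵢ ℝ).continuous.comp
    (continuous_const.prodMk (continuous_neg.smul continuous_const))

lemma nnnorm_jacobiOperator_le {c C : ℝ} (hc : |c| ≤ C) :
    ‖jacobiOperator c‖₊ ≤ (1 + C).toNNReal := by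
  have hC : 0 ≤ 1 + C := by linarith [abs_nonneg c]
  rw [← NNReal.coe_le_coe, coe_nnnorm, Real.coe_toNNReal _ hC]
  refine ContinuousLinearMap.opNorm_le_bound _ hC fun p => ?_
  have h1 : |p.1| ≤ ‖p‖ := norm_fst_le p
  have h2 : |p.2| ≤ ‖p‖ := norm_snd_le p
  calc ‖jacobiOperator c p‖ = max |p.2| (|c| * |p.1|) := by simp [Prod.norm_def]
    _ ≤ (1 + C) * ‖p‖ := max_le (by nlinarith [norm_nonneg p, abs_nonneg c])
        (by nlinarith [abs_nonneg c, abs_nonneg p.1, norm_nonneg p])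

def IsJacobiField (k u : ℝ → ℝ) : Prop :=
  ContDiff ℝ 2 u ∧ ∀ t, deriv (deriv u) t + k t * u t = 0

namespace IsJacobiField

variable {k u w : ℝ → ℝ}

lemma differentiable (hu : IsJacobiField k u) : Differentiable ℝ u :=
  hu.1.differentiable (by norm_num)

lemma contDiff_deriv (hu : IsJacobiField k u) : ContDiff ℝ 1 (deriv u) :=
  ((contDiff_succ_iff_deriv (n := 1)).mp hu.1).2.2

lemma hasDerivAt (hu : IsJacobiField k u) (t : ℝ) : HasDerivAt u (deriv u t) t :=
  (hu.differentiable t).hasDerivAt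

lemma hasDerivAt_deriv (hu : IsJacobiField k u) (t : ℝ) :
    HasDerivAt (deriv u) (-(k t * u t)) t := by
  rw [← eq_neg_of_add_eq_zero_left (hu.2 t)]
  exact (hu.contDiff_deriv.differentiable (by norm_num) t).hasDerivAt

lemma continuous (hu : IsJacobiField k u) : Continuous u := hu.differentiable.continuous

lemma continuous_deriv (hu : IsJacobiField k u) : Continuous (deriv u) :=
  hu.contDiff_deriv.continuous

lemma isIntegralCurve (hu : IsJacobiField k u) :
    IsIntegralCurve (fun t => (u t, deriv u t)) (fun t => jacobiOperator (k t)) := fun t => by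
  simpa using (hu.hasDerivAt t).prodMk (hu.hasDerivAt_deriv t)

lemma of_hasDerivAt (hk : Continuous k) {v : ℝ → ℝ} (hu : ∀ t, HasDerivAt u (v t) t)
    (hv : ∀ t, HasDerivAt v (-(k t * u t)) t) : IsJacobiField k u := by
  have hdu : deriv u = v := funext fun t => (hu t).deriv
  have hdv : deriv v = fun t => -(k t * u t) := funext fun t => (hv t).deriv
  have hcont : Continuous u := continuous_iff_continuousAt.mpr fun t => (hu t).continuousAt
  refine ⟨?_, fun t => by simp [hdu, hdv]⟩
  rw [show (2 : WithTop ℕ∞) = 1 + 1 from rfl, contDiff_succ_iff_deriv, hdu, contDiff_one_iff_deriv,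
    hdv]
  exact ⟨fun t => (hu t).differentiableAt, by simp, fun t => (hv t).differentiableAt,
    (hk.mul hcont).neg⟩

lemma of_isIntegralCurve (hk : Continuous k) {γ : ℝ → ℝ × ℝ}
    (hγ : IsIntegralCurve γ (fun t => jacobiOperator (k t))) :
    IsJacobiField k (fun t => (γ t).1) ∧ deriv (fun t => (γ t).1) = fun t => (γ t).2 := by
  have h1 (t : ℝ) : HasDerivAt (fun t => (γ t).1) (γ t).2 t := (hγ t).fst
  have h2 (t : ℝ) : HasDerivAt (fun t => (γ t).2) (-(k t * (γ t).1)) t := by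
    have : HasDerivAt (fun t => (γ t).2) (jacobiOperator (k t) (γ t)).2 t := (hγ t).snd
    simpa using this
  exact ⟨of_hasDerivAt hk h1 h2, funext fun t => (h1 t).deriv⟩

lemma eq_of_eq_of_deriv_eq {C : ℝ} (hC : ∀ t, |k t| ≤ C) (hu : IsJacobiField k u)
    (hw : IsJacobiField k w) {t₀ : ℝ} (h : u t₀ = w t₀) (h' : deriv u t₀ = deriv w t₀) : u = w := by
  have := ODE_solution_unique_univ (s := fun _ => univ) (t₀ := t₀)
    (fun t => ((jacobiOperator (k t)).lipschitz.weaken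
      (nnnorm_jacobiOperator_le (hC t))).lipschitzOnWith)
    (fun t => ⟨hu.isIntegralCurve t, trivial⟩) (fun t => ⟨hw.isIntegralCurve t, trivial⟩)
    (by rw [h, h'])
  exact funext fun t => congrArg Prod.fst (congrFun this t)

lemma smul_add_smul (hk : Continuous k) (hu : IsJacobiField k u) (hw : IsJacobiField k w)
    (a b : ℝ) : IsJacobiField k (fun t => a * u t + b * w t) :=
  of_hasDerivAt hk (fun t => ((hu.hasDerivAt t).const_mul a).add ((hw.hasDerivAt t).const_mul b))
    fun t => (((hu.hasDerivAt_deriv t).const_mul a).add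
      ((hw.hasDerivAt_deriv t).const_mul b)).congr_deriv (by ring)

lemma deriv_smul_add_smul (hu : IsJacobiField k u) (hw : IsJacobiField k w) (a b t : ℝ) :
    deriv (fun t => a * u t + b * w t) t = a * deriv u t + b * deriv w t :=
  (((hu.hasDerivAt t).const_mul a).add ((hw.hasDerivAt t).const_mul b)).deriv

lemma comp_add_const {T : ℝ} (hk : Function.Periodic k T) (hu : IsJacobiField k u) :
    IsJacobiField k (fun t => u (t + T)) := by
  refine ⟨hu.1.comp (contDiff_id.add contDiff_const), fun t => ?_⟩
  have : deriv (fun t => u (t + T)) = fun t => deriv u (t + T) :=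
    funext (deriv_comp_add_const u T)
  rw [this, deriv_comp_add_const, ← hk t]
  exact hu.2 (t + T)

lemma wronskian_eq (hu : IsJacobiField k u) (hw : IsJacobiField k w) (s t : ℝ) :
    u s * deriv w s - w s * deriv u s = u t * deriv w t - w t * deriv u t := by
  have hW (t : ℝ) : HasDerivAt (fun t => u t * deriv w t - w t * deriv u t) 0 t :=
    (((hu.hasDerivAt t).mul (hw.hasDerivAt_deriv t)).sub
      ((hw.hasDerivAt t).mul (hu.hasDerivAt_deriv t))).congr_deriv (by ring)
  exact is_const_of_deriv_eq_zero (fun t => (hW t).differentiableAt) (fun t => (hW t).deriv) s t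

lemma integral_deriv_sq_sub (hk : Continuous k) (hu : IsJacobiField k u) (a b : ℝ) :
    ∫ t in a..b, (deriv u t ^ 2 - k t * u t ^ 2) = u b * deriv u b - u a * deriv u a := by
  have hcont : Continuous fun t => deriv u t ^ 2 - k t * u t ^ 2 :=
    (hu.continuous_deriv.pow 2).sub (hk.mul (hu.continuous.pow 2))
  exact intervalIntegral.integral_eq_sub_of_hasDerivAt
    (fun t _ => ((hu.hasDerivAt t).mul (hu.hasDerivAt_deriv t)).congr_deriv (by ring))
    (hcont.intervalIntegrable a b)

lemma integral_sq_pos {C : ℝ} (hC : ∀ t, |k t| ≤ C) (hu : IsJacobiField k u) (hne : u ≠ 0)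
    {a b : ℝ} (hab : a < b) : 0 < ∫ t in a..b, u t ^ 2 := by
  refine intervalIntegral.integral_pos hab (hu.continuous.pow 2).continuousOn
    (fun t _ => sq_nonneg _) ?_
  by_contra! hzero
  have hvanish : EqOn u 0 (Icc a b) := fun t ht => pow_eq_zero_iff two_ne_zero |>.mp
    (le_antisymm (hzero t ht) (sq_nonneg _))
  have hmid : (a + b) / 2 ∈ Ioo a b := ⟨by linarith, by linarith⟩
  have hzero_field : IsJacobiField k 0 := ⟨contDiff_const, fun t => by simp⟩
  refine hne (hu.eq_of_eq_of_deriv_eq hC hzero_field (t₀ := (a + b) / 2)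
    (hvanish (Ioo_subset_Icc_self hmid)) ?_)
  exact (Filter.eventuallyEq_of_mem (Icc_mem_nhds hmid.1 hmid.2) hvanish).deriv_eq

lemma monotone_mul_deriv (hk : ∀ t, k t ≤ 0) (hu : IsJacobiField k u) :
    Monotone fun t => u t * deriv u t :=
  monotone_of_hasDerivAt_nonneg (f' := fun t => deriv u t ^ 2 - k t * u t ^ 2)
    (fun t => ((hu.hasDerivAt t).mul (hu.hasDerivAt_deriv t)).congr_deriv (by ring))
    fun t => by dsimp; nlinarith [hk t, sq_nonneg (u t), sq_nonneg (deriv u t)]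

lemma monotoneOn_sq (hk : ∀ t, k t ≤ 0) (hu : IsJacobiField k u) (h0 : 0 ≤ u 0 * deriv u 0) :
    MonotoneOn (fun t => u t ^ 2) (Ici 0) := by
  refine monotoneOn_of_hasDerivWithinAt_nonneg (convex_Ici 0) (hu.continuous.pow 2).continuousOn
    (fun t _ => ((hu.hasDerivAt t).pow 2).hasDerivWithinAt) fun t ht => ?_
  rw [interior_Ici] at ht
  have := h0.trans (hu.monotone_mul_deriv hk ht.le)
  simp only [Nat.cast_ofNat, Nat.add_one_sub_one, pow_one]
  nlinarith

lemma monotoneOn_deriv_sq (hk : ∀ t, k t ≤ 0) (hu : IsJacobiField k u)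
    (h0 : 0 ≤ u 0 * deriv u 0) : MonotoneOn (fun t => deriv u t ^ 2) (Ici 0) := by
  refine monotoneOn_of_hasDerivWithinAt_nonneg (convex_Ici 0)
    (hu.continuous_deriv.pow 2).continuousOn
    (fun t _ => ((hu.hasDerivAt_deriv t).pow 2).hasDerivWithinAt) fun t ht => ?_
  rw [interior_Ici] at ht
  have := h0.trans (hu.monotone_mul_deriv hk ht.le)
  simp only [Nat.cast_ofNat, Nat.add_one_sub_one, pow_one]
  nlinarith [hk t]

lemma two_le_of_nonpos {c s : ℝ → ℝ} (hk : ∀ t, k t ≤ 0)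
    (hc : IsJacobiField k c) (hs : IsJacobiField k s) (hc0 : c 0 = 1) (hc0' : deriv c 0 = 0)
    (hs0 : s 0 = 0) (hs0' : deriv s 0 = 1) : 2 ≤ c 1 + deriv s 1 := by
  have hc1 : 1 ≤ c 1 := one_le_of_forall_one_le_sq zero_le_one hc.continuous.continuousOn
    (by simp [hc0]) fun t ht => by
      simpa [hc0] using hc.monotoneOn_sq hk (by simp [hc0']) self_mem_Ici ht.1 ht.1
  have hs1 : 1 ≤ deriv s 1 := one_le_of_forall_one_le_sq zero_le_one
    hs.continuous_deriv.continuousOn (by simp [hs0']) fun t ht => by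
      simpa [hs0'] using hs.monotoneOn_deriv_sq hk (by simp [hs0]) self_mem_Ici ht.1 ht.1
  linarith

end IsJacobiField

lemma exists_isJacobiField {k : ℝ → ℝ} {C : ℝ} (hk : Continuous k) (hC : ∀ t, |k t| ≤ C)
    (a b : ℝ) : ∃ u, IsJacobiField k u ∧ u 0 = a ∧ deriv u 0 = b := by
  obtain ⟨γ, hγ0, hγ⟩ := exists_isIntegralCurve_linear (continuous_jacobiOperator.comp hk)
    (fun t => nnnorm_jacobiOperator_le (hC t)) (a, b)
  obtain ⟨hu, hdu⟩ := IsJacobiField.of_isIntegralCurve hk hγ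
  exact ⟨_, hu, by simp [hγ0], by simp [hdu, hγ0]⟩

lemma continuous_of_isJacobiField_add_const {k : ℝ → ℝ} {C : ℝ} (hC : ∀ t, |k t| ≤ C)
    {u : ℝ → ℝ → ℝ} (hu : ∀ μ, IsJacobiField (fun t => k t + μ) (u μ)) {a b : ℝ}
    (h0 : ∀ μ, u μ 0 = a) (h0' : ∀ μ, deriv (u μ) 0 = b) {T : ℝ} (hT : 0 ≤ T) :
    Continuous fun μ => (u μ T, deriv (u μ) T) := by
  rw [continuous_iff_continuousAt]
  intro μ
  obtain ⟨S, hS⟩ := (isCompact_Icc (a := 0) (b := T)).exists_bound_of_continuousOn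
    (hu μ).continuous.continuousOn
  set K : ℝ≥0 := (1 + (C + (|μ| + 1))).toNNReal
  have hdist (ν : ℝ) (hν : |ν - μ| ≤ 1) :
      dist (u ν T, deriv (u ν) T) (u μ T, deriv (u μ) T) ≤
        gronwallBound 0 K (0 + |ν - μ| * S) (T - 0) := by
    have hbound (t : ℝ) : |k t + ν| ≤ C + (|μ| + 1) := by
      have : |ν| ≤ |μ| + 1 := by
        have := abs_sub_abs_le_abs_sub ν μ
        linarith
      exact (abs_add_le _ _).trans (add_le_add (hC t) this)
    -- the state of `u μ` solves the equation of `k + ν` up to an error `|ν - μ| |u μ|`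
    refine dist_le_of_approx_trajectories_ODE (v := fun t => jacobiOperator (k t + ν))
      (fun t => (jacobiOperator _).lipschitz.weaken (nnnorm_jacobiOperator_le (hbound t)))
      (hu ν).isIntegralCurve.continuous.continuousOn
      (fun t _ => ((hu ν).isIntegralCurve t).hasDerivWithinAt) (fun t _ => (dist_self _).le)
      (hu μ).isIntegralCurve.continuous.continuousOn
      (fun t _ => ((hu μ).isIntegralCurve t).hasDerivWithinAt) (fun t ht => ?_)
      (by simp [h0, h0']) T ⟨hT, le_rfl⟩
    have := hS t (Ico_subset_Icc_self ht)
    simp only [jacobiOperator_apply, Prod.dist_eq, dist_self, Real.dist_eq]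
    rw [max_eq_right (abs_nonneg _), show -((k t + μ) * u μ t) - -((k t + ν) * u μ t) =
      (ν - μ) * u μ t by ring, abs_mul]
    exact mul_le_mul_of_nonneg_left this (abs_nonneg _)
  have hg : Tendsto (fun ν => gronwallBound 0 K (0 + |ν - μ| * S) (T - 0)) (𝓝 μ) (𝓝 0) := by
    simpa [Function.comp_def, gronwallBound_ε0_δ0] using
      ((gronwallBound_continuous_ε 0 K (T - 0)).comp
        (show Continuous fun ν : ℝ => 0 + |ν - μ| * S by fun_prop)).tendsto μ
  rw [ContinuousAt, tendsto_iff_dist_tendsto_zero]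
  refine squeeze_zero' (Eventually.of_forall fun _ => dist_nonneg) ?_ hg
  filter_upwards [Metric.closedBall_mem_nhds μ one_pos] with ν hν
  exact hdist ν (by simpa [Real.dist_eq] using hν)

/-- The monodromy matrix, when `c` and `s` are the Jacobi fields with initial data `(1, 0)` and
`(0, 1)`. -/
noncomputable def jacobiMonodromy (c s : ℝ → ℝ) : Matrix (Fin 2) (Fin 2) ℝ :=
  !![c 1, s 1; deriv c 1, deriv s 1]

lemma trace_jacobiMonodromy (c s : ℝ → ℝ) : (jacobiMonodromy c s).trace = c 1 + deriv s 1 := by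
  simp [jacobiMonodromy, Matrix.trace_fin_two]

section PrincipalSolutions

variable {k c s : ℝ → ℝ} (hc : IsJacobiField k c) (hs : IsJacobiField k s) (hc0 : c 0 = 1)
  (hc0' : deriv c 0 = 0) (hs0 : s 0 = 0) (hs0' : deriv s 0 = 1)
include hc hs hc0 hc0' hs0 hs0'

lemma det_jacobiMonodromy : (jacobiMonodromy c s).det = 1 := by
  simpa [jacobiMonodromy, Matrix.det_fin_two, hc0, hc0', hs0, hs0'] using hc.wronskian_eq hs 1 0

lemma exists_periodic_isJacobiField_of_trace_eq_two (hk : Continuous k) {C : ℝ}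
    (hC : ∀ t, |k t| ≤ C) (hper : Function.Periodic k 1) (htr : c 1 + deriv s 1 = 2) :
    ∃ u, IsJacobiField k u ∧ Function.Periodic u 1 ∧ u ≠ 0 := by
  obtain ⟨v, hv, hNv⟩ := (jacobiMonodromy c s).exists_mulVec_eq_smul_of_sq_sub (c := 1) (by
    rw [det_jacobiMonodromy hc hs hc0 hc0' hs0 hs0', trace_jacobiMonodromy, htr]
    norm_num)
  obtain ⟨u, hu, hu0, hu0', hu1, hu1'⟩ : ∃ u, IsJacobiField k u ∧ u 0 = v 0 ∧ deriv u 0 = v 1 ∧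
      u 1 = v 0 ∧ deriv u 1 = v 1 := by
    have hN0 := congrFun hNv 0
    have hN1 := congrFun hNv 1
    simp [jacobiMonodromy, Matrix.mulVec, dotProduct, Fin.sum_univ_two] at hN0 hN1
    refine ⟨_, hc.smul_add_smul hk hs (v 0) (v 1), ?_, ?_, ?_, ?_⟩
    · simp [hc0, hs0]
    · simp [hc.deriv_smul_add_smul hs, hc0', hs0']
    · linarith
    · rw [hc.deriv_smul_add_smul hs]; linarith
  refine ⟨u, hu, fun t => congrFun (IsJacobiField.eq_of_eq_of_deriv_eq hC
    (hu.comp_add_const hper) hu (t₀ := 0) (by simp [hu0, hu1])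
    (by simp [deriv_comp_add_const, hu0', hu1'])) t, ?_⟩
  rintro rfl
  exact hv (by ext i; fin_cases i <;> simp [← hu0, ← hu0'])

end PrincipalSolutions

def IsStrictlyStable (K : ℝ → ℝ) (δ : ℝ) : Prop :=
  ∀ f : ℝ → ℝ, ContDiff ℝ 1 f → (∀ t, f (t + 1) = f t) →
    δ * ∫ t in (0:ℝ)..1, f t ^ 2 ≤
      (∫ t in (0:ℝ)..1, deriv f t ^ 2) - ∫ t in (0:ℝ)..1, K t * f t ^ 2

namespace IsStrictlyStable

variable {K : ℝ → ℝ} {δ : ℝ}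

lemma eq_zero_of_periodic (hstab : IsStrictlyStable K δ) (hK : Continuous K) {C : ℝ}
    (hC : ∀ t, |K t| ≤ C) {μ : ℝ} (hμ : μ < δ) {u : ℝ → ℝ}
    (hu : IsJacobiField (fun t => K t + μ) u) (hper : Function.Periodic u 1) : u = 0 := by
  by_contra hne
  have hpos := hu.integral_sq_pos (C := C + |μ|)
    (fun t => (abs_add_le _ _).trans (by linarith [hC t])) hne zero_lt_one
  have hper' : deriv u 1 = deriv u 0 := by
    simpa [funext hper] using (deriv_comp_add_const u 1 0).symm
  have hu1 : u 1 = u 0 := by simpa using hper 0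
  have henergy := hu.integral_deriv_sq_sub (k := fun t => K t + μ) (hK.add continuous_const) 0 1
  rw [hu1, hper', sub_self] at henergy
  have hdu := hu.continuous_deriv
  have hu' := hu.continuous
  have hsplit : ∫ t in (0:ℝ)..1, (deriv u t ^ 2 - (K t + μ) * u t ^ 2) =
      (∫ t in (0:ℝ)..1, deriv u t ^ 2) - (∫ t in (0:ℝ)..1, K t * u t ^ 2) -
        μ * ∫ t in (0:ℝ)..1, u t ^ 2 := by
    rw [← intervalIntegral.integral_const_mul, ← intervalIntegral.integral_sub,
      ← intervalIntegral.integral_sub]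
    · congr 1 with t; ring
    all_goals exact Continuous.intervalIntegrable (by fun_prop) _ _
  have := hstab u (hu.1.of_le (by norm_num)) hper
  nlinarith

theorem two_lt_trace {c s : ℝ → ℝ} (hstab : IsStrictlyStable K δ)
    (hδ : 0 < δ) (hK : Continuous K) (hper : Function.Periodic K 1) (hc : IsJacobiField K c)
    (hs : IsJacobiField K s) (hc0 : c 0 = 1) (hc0' : deriv c 0 = 0) (hs0 : s 0 = 0)
    (hs0' : deriv s 0 = 1) : 2 < c 1 + deriv s 1 := by
  obtain ⟨C, hC⟩ := hper.exists_abs_le one_ne_zero hK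
  have hC0 : 0 ≤ C := (abs_nonneg _).trans (hC 0)
  have hKμ (μ : ℝ) : Continuous fun t => K t + μ := hK.add continuous_const
  have hCμ (μ t : ℝ) : |K t + μ| ≤ C + |μ| := (abs_add_le _ _).trans (by linarith [hC t])
  choose c' hc' hc'0 hc'0' using fun μ => exists_isJacobiField (hKμ μ) (hCμ μ) 1 0
  choose s' hs' hs'0 hs'0' using fun μ => exists_isJacobiField (hKμ μ) (hCμ μ) 0 1
  set Δ : ℝ → ℝ := fun μ => c' μ 1 + deriv (s' μ) 1
  have hΔ : Continuous Δ :=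
    (continuous_fst.comp (continuous_of_isJacobiField_add_const hC hc' hc'0 hc'0' zero_le_one)).add
      (continuous_snd.comp (continuous_of_isJacobiField_add_const hC hs' hs'0 hs'0' zero_le_one))
  have hΔ0 : Δ 0 = c 1 + deriv s 1 := by
    have hc'' : IsJacobiField K (c' 0) := by simpa using hc' 0
    have hs'' : IsJacobiField K (s' 0) := by simpa using hs' 0
    show c' 0 1 + deriv (s' 0) 1 = _
    rw [hc''.eq_of_eq_of_deriv_eq hC hc (t₀ := 0) (by rw [hc'0, hc0]) (by rw [hc'0', hc0']),
      hs''.eq_of_eq_of_deriv_eq hC hs (t₀ := 0) (by rw [hs'0, hs0]) (by rw [hs'0', hs0'])]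
  have hΔC : 2 ≤ Δ (-C) :=
    (hc' (-C)).two_le_of_nonpos (fun t => by linarith [(abs_le.mp (hC t)).2]) (hs' (-C))
      (hc'0 _) (hc'0' _) (hs'0 _) (hs'0' _)
  by_contra! h
  obtain ⟨μ, hμ, hΔμ⟩ := intermediate_value_Icc' (neg_nonpos.mpr hC0) hΔ.continuousOn
    ⟨hΔ0 ▸ h, hΔC⟩
  obtain ⟨u, hu, hu_per, hne⟩ := exists_periodic_isJacobiField_of_trace_eq_two (hc' μ) (hs' μ)
    (hc'0 μ) (hc'0' μ) (hs'0 μ) (hs'0' μ) (hKμ μ) (hCμ μ) (fun t => by simp [hper t]) hΔμ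
  exact hne (hstab.eq_zero_of_periodic hK hC (hμ.2.trans_lt hδ) hu hu_per)

end IsStrictlyStable

/-- The linear Poincaré map of a strictly stable simple closed geodesic has
real eigenvalues λ and 1/λ with 0 < λ < 1. -/
theorem stmt6 (K : ℝ → ℝ) (hK : Continuous K) (hper : ∀ t, K (t + 1) = K t)
    (δ : ℝ) (hδ : 0 < δ)
    (hstab : ∀ f : ℝ → ℝ, ContDiff ℝ 1 f → (∀ t, f (t + 1) = f t) →
      δ * ∫ t in (0:ℝ)..1, (f t) ^ 2 ≤
        (∫ t in (0:ℝ)..1, (deriv f t) ^ 2) - ∫ t in (0:ℝ)..1, K t * (f t) ^ 2)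
    (M : Matrix (Fin 2) (Fin 2) ℝ)
    (hM : ∀ u : ℝ → ℝ, ContDiff ℝ 2 u → (∀ t, deriv (deriv u) t + K t * u t = 0) →
      ∀ t, ![u (t + 1), deriv u (t + 1)] = M.mulVec ![u t, deriv u t]) :
    ∃ lam : ℝ, 0 < lam ∧ lam < 1 ∧
      (∃ v : Fin 2 → ℝ, v ≠ 0 ∧ M.mulVec v = lam • v) ∧
      (∃ w : Fin 2 → ℝ, w ≠ 0 ∧ M.mulVec w = lam⁻¹ • w) := by
  obtain ⟨C, hC⟩ := Function.Periodic.exists_abs_le hper one_ne_zero hK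
  obtain ⟨c, hc, hc0, hc0'⟩ := exists_isJacobiField hK hC 1 0
  obtain ⟨s, hs, hs0, hs0'⟩ := exists_isJacobiField hK hC 0 1
  have hMc := hM c hc.1 hc.2 0
  have hMs := hM s hs.1 hs.2 0
  have hM_eq : M = jacobiMonodromy c s := by
    simp [hc0, hc0', hs0, hs0'] at hMc hMs
    ext i j
    fin_cases i <;> fin_cases j <;> simp [jacobiMonodromy, hMc, hMs]
  subst hM_eq
  exact Matrix.exists_eigenvalues_of_det_eq_one_of_two_lt_trace _
    (det_jacobiMonodromy hc hs hc0 hc0' hs0 hs0') (trace_jacobiMonodromy c s ▸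
      IsStrictlyStable.two_lt_trace hstab hδ hK hper hc hs hc0 hc0' hs0 hs0')
end

section
/- Let δ > 0, let f : (−δ, δ) × [0,1] → ℝ, (w, s) ↦ f_w(s), be C¹, and let h : ℝ → ℝ² be C¹. If ∂f_w/∂w(0, s) ≠ 0 for every s ∈ [0,1], then there exists a sequence wᵢ → 0 such that for each i the curve s ↦ (s, f_{wᵢ}(s)) is transverse to h, i.e. for every t ∈ ℝ and every s ∈ [0,1] with h(t) = (s, f_{wᵢ}(s)), the vectors h'(t) and (1, ∂f_{wᵢ}/∂s(s)) are linearly independent in ℝ². -/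
/-!
Near `w = 0` the partial derivative `∂f/∂w` stays away from `0` on `[-ε, ε] × [0, 1]`, so every
`f(·, s)` is uniformly expanding there. Hence a point `h t` lies on at most one graph `f_w`, say
for `w = φ t`, and tangency at `t` means that `h₂ t' - f_{φ t}(h₁ t')` vanishes to second order
in `t' - t`; by the expansion, so does `φ t' - φ t` along the set of tangency times. The
one-dimensional Sard lemma makes the tangency parameters a null set, and parameters outside it
accumulate at `0`. At the endpoints `s = 0, 1`, where `deriv` of `f_w` may be the junk value `0`,
the same argument runs with the constant curves `σ = 0, 1` in place of `h₁`.
-/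

open Set Filter Topology MeasureTheory Asymptotics

lemma volume_image_eq_zero_of_hasDerivWithinAt_zero {φ : ℝ → ℝ} {T : Set ℝ}
    (hφ : ∀ t ∈ T, HasDerivWithinAt φ 0 T t) : volume (φ '' T) = 0 := by
  refine addHaar_image_eq_zero_of_det_fderivWithin_eq_zero volume
    (f' := fun _ => (0 : ℝ →L[ℝ] ℝ)) (fun t ht => ?_) fun _ _ => by simp
  simpa using (hφ t ht).hasFDerivWithinAt

lemma hasDerivWithinAt_zero_of_isBigO {𝕜 E F : Type*} [NontriviallyNormedField 𝕜]
    [NormedAddCommGroup E] [NormedSpace 𝕜 E] [NormedAddCommGroup F] [NormedSpace 𝕜 F]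
    {φ : 𝕜 → E} {ψ : 𝕜 → F} {T : Set 𝕜} {t : 𝕜} (hψ : HasDerivWithinAt ψ 0 T t) (hψt : ψ t = 0)
    (hO : (fun t' => φ t' - φ t) =O[𝓝[T] t] ψ) : HasDerivWithinAt φ 0 T t := by
  rw [hasDerivWithinAt_iff_isLittleO] at hψ ⊢
  simp only [hψt, smul_zero, sub_zero] at hψ ⊢
  exact hO.trans_isLittleO hψ

lemma mul_abs_sub_le_abs_sub_of_le_abs_deriv {g g' : ℝ → ℝ} {s : Set ℝ} {c : ℝ}
    (hs : Convex ℝ s) (hg : ∀ x ∈ s, HasDerivAt g (g' x) x) (hc : ∀ x ∈ s, c ≤ |g' x|)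
    {x y : ℝ} (hx : x ∈ s) (hy : y ∈ s) : c * |x - y| ≤ |g x - g y| := by
  wlog hyx : y < x generalizing x y
  · rcases (not_lt.1 hyx).eq_or_lt with rfl | hxy
    · simp
    · simpa only [abs_sub_comm] using this hy hx hxy
  have hsub : Icc y x ⊆ s := hs.ordConnected.out hy hx
  obtain ⟨z, hz, hslope⟩ := exists_hasDerivAt_eq_slope g g' hyx
    (fun z hz => (hg z (hsub hz)).continuousAt.continuousWithinAt)
    (fun z hz => hg z (hsub (Ioo_subset_Icc_self hz)))
  rw [eq_div_iff (sub_ne_zero.2 hyx.ne')] at hslope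
  rw [← hslope, abs_mul]
  exact mul_le_mul_of_nonneg_right (hc z (hsub (Ioo_subset_Icc_self hz))) (abs_nonneg _)

lemma hasDerivAt_fderivWithin_prod_apply_fst {𝕜 F : Type*} [NontriviallyNormedField 𝕜]
    [NormedAddCommGroup F] [NormedSpace 𝕜 F] {f : 𝕜 × 𝕜 → F} {A B : Set 𝕜} (hA : IsOpen A)
    (hf : DifferentiableOn 𝕜 f (A ×ˢ B)) {w s : 𝕜} (hw : w ∈ A) (hs : s ∈ B) :
    HasDerivAt (fun w' => f (w', s)) (fderivWithin 𝕜 f (A ×ˢ B) (w, s) (1, 0)) w :=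
  ((hf _ ⟨hw, hs⟩).hasFDerivWithinAt.comp_hasDerivWithinAt w
    ((hasDerivAt_id w).prodMk (hasDerivAt_const w s)).hasDerivWithinAt
    (fun _ hw' => ⟨hw', hs⟩)).hasDerivAt (hA.mem_nhds hw)

lemma exists_pos_eventually_forall_le_abs {X Y : Type*} [TopologicalSpace X] [TopologicalSpace Y]
    {p : X × Y → ℝ} {A : Set X} {K : Set Y} {x₀ : X} (hA : A ∈ 𝓝 x₀) (hK : IsCompact K)
    (hp : ContinuousOn p (A ×ˢ K)) (hp₀ : ∀ y ∈ K, p (x₀, y) ≠ 0) :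
    ∃ c > 0, ∀ᶠ x in 𝓝 x₀, ∀ y ∈ K, c ≤ |p (x, y)| := by
  have hx₀ : x₀ ∈ A := mem_of_mem_nhds hA
  obtain ⟨m, hm, hmK⟩ := hK.exists_forall_le' (f := fun y => |p (x₀, y)|)
    (hp.comp (Continuous.prodMk_right x₀).continuousOn fun _ hy => ⟨hx₀, hy⟩).abs
    fun y hy => abs_pos.2 (hp₀ y hy)
  have hnear : ∀ y ∈ K, ∀ᶠ z : X × Y in 𝓝 (x₀, y), z ∈ A ×ˢ K → m / 2 < |p z| := fun y hy =>
    eventually_nhdsWithin_iff.1 <| (hp _ ⟨hx₀, hy⟩).abs.eventually <|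
      lt_mem_nhds (by linarith [hmK y hy])
  refine ⟨m / 2, half_pos hm, ?_⟩
  filter_upwards [hK.eventually_forall_of_forall_eventually
    (P := fun x y => (x, y) ∈ A ×ˢ K → m / 2 < |p (x, y)|) hnear, hA] with x hx hxA y hy
  exact (hx y hy ⟨hxA, hy⟩).le

lemma exists_pos_forall_mul_abs_sub_le {f : ℝ × ℝ → ℝ} {A K : Set ℝ} (hA : IsOpen A)
    (h₀ : (0 : ℝ) ∈ A) (hK : IsCompact K) (hKu : UniqueDiffOn ℝ K)
    (hf : ContDiffOn ℝ 1 f (A ×ˢ K)) (hmove : ∀ s ∈ K, deriv (fun w => f (w, s)) 0 ≠ 0) :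
    ∃ ε > 0, Icc (-ε) ε ⊆ A ∧ ∃ c > 0, ∀ s ∈ K, ∀ w₁ ∈ Icc (-ε) ε, ∀ w₂ ∈ Icc (-ε) ε,
      c * |w₁ - w₂| ≤ |f (w₁, s) - f (w₂, s)| := by
  set p : ℝ × ℝ → ℝ := fun x => fderivWithin ℝ f (A ×ˢ K) x (1, 0)
  have hp : ∀ w ∈ A, ∀ s ∈ K, HasDerivAt (fun w' => f (w', s)) (p (w, s)) w := fun w hw s hs =>
    hasDerivAt_fderivWithin_prod_apply_fst hA (hf.differentiableOn one_ne_zero) hw hs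
  have hpc : ContinuousOn p (A ×ˢ K) :=
    (hf.continuousOn_fderivWithin (hA.uniqueDiffOn.prod hKu) le_rfl).clm_apply continuousOn_const
  obtain ⟨c, hc, hbound⟩ := exists_pos_eventually_forall_le_abs (hA.mem_nhds h₀) hK hpc
    fun s hs => (hp 0 h₀ s hs).deriv ▸ hmove s hs
  obtain ⟨ε, hε, hεsub⟩ := (nhds_basis_Icc_pos (0 : ℝ)).mem_iff.1 (hbound.and (hA.mem_nhds h₀))
  simp only [zero_sub, zero_add] at hεsub
  refine ⟨ε, hε, fun w hw => (hεsub hw).2, c, hc, fun s hs w₁ hw₁ w₂ hw₂ => ?_⟩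
  exact mul_abs_sub_le_abs_sub_of_le_abs_deriv (convex_Icc _ _)
    (fun w hw => hp w (hεsub hw).2 s hs) (fun w hw => (hεsub hw).1 s hs) hw₁ hw₂

/-- `q w s` stands for `∂(F w)/∂s`: the curve `t ↦ (σ t, g t)` meets the graph of `F w` over `S`
with its velocity parallel to `(1, q w (σ t))`. -/
def tangencyParams (F q : ℝ → ℝ → ℝ) (W S : Set ℝ) (σ g : ℝ → ℝ) : Set ℝ :=
  {w ∈ W | ∃ t, σ t ∈ S ∧ F w (σ t) = g t ∧ deriv σ t * q w (σ t) = deriv g t}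

lemma volume_tangencyParams_eq_zero {F q : ℝ → ℝ → ℝ} {W S : Set ℝ} {σ g : ℝ → ℝ} {c : ℝ}
    (hc : 0 < c) (hexp : ∀ s ∈ S, ∀ w₁ ∈ W, ∀ w₂ ∈ W, c * |w₁ - w₂| ≤ |F w₁ s - F w₂ s|)
    (hq : ∀ w ∈ W, ∀ s ∈ S, HasDerivWithinAt (F w) (q w s) S s)
    (hσ : Differentiable ℝ σ) (hg : Differentiable ℝ g) :
    volume (tangencyParams F q W S σ g) = 0 := by
  set φ : ℝ → ℝ := fun t => Classical.epsilon fun w => w ∈ W ∧ F w (σ t) = g t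
  set T : Set ℝ := {t | σ t ∈ S ∧ ∃ w ∈ W, F w (σ t) = g t ∧ deriv σ t * q w (σ t) = deriv g t}
  have hφ : ∀ {t w}, σ t ∈ S → w ∈ W → F w (σ t) = g t → φ t = w := fun {t w} hs hw hF => by
    obtain ⟨hφW, hφF⟩ : φ t ∈ W ∧ F (φ t) (σ t) = g t :=
      Classical.epsilon_spec (p := fun w' => w' ∈ W ∧ F w' (σ t) = g t) ⟨w, hw, hF⟩
    have := hexp _ hs _ hφW _ hw
    rw [hφF, hF, sub_self, abs_zero] at this
    exact sub_eq_zero.1 (abs_nonpos_iff.1 (nonpos_of_mul_nonpos_right this hc))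
  have hsub : tangencyParams F q W S σ g ⊆ φ '' T := by
    rintro w ⟨hw, t, hs, hF, hdet⟩
    exact ⟨t, ⟨hs, w, hw, hF, hdet⟩, hφ hs hw hF⟩
  refine measure_mono_null hsub (volume_image_eq_zero_of_hasDerivWithinAt_zero ?_)
  rintro t ⟨hs, w, hw, hF, hdet⟩
  obtain rfl := hφ hs hw hF
  have hψ : HasDerivWithinAt (fun t' => g t' - F (φ t) (σ t')) 0 T t := by
    have := (hg t).hasDerivAt.hasDerivWithinAt.sub
      ((hq _ hw _ hs).comp t (hσ t).hasDerivAt.hasDerivWithinAt fun _ (ht' : _ ∈ T) => ht'.1)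
    rwa [mul_comm, hdet, sub_self] at this
  refine hasDerivWithinAt_zero_of_isBigO hψ (by simp [hF]) <|
    isBigO_iff.2 ⟨c⁻¹, eventually_nhdsWithin_of_forall fun t' ⟨hs', w', hw', hF', _⟩ => ?_⟩
  obtain rfl := hφ hs' hw' hF'
  rw [Real.norm_eq_abs, Real.norm_eq_abs, ← hF', le_inv_mul_iff₀ hc]
  exact hexp _ hs' _ hw' _ hw

lemma exists_seq_tendsto_forall_mem_diff_of_measure_zero {X : Type*} [TopologicalSpace X]
    [FrechetUrysohnSpace X] [MeasurableSpace X] {μ : Measure X} [μ.IsOpenPosMeasure]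
    {s B : Set X} {x : X} (hs : s ∈ 𝓝 x) (hB : μ B = 0) :
    ∃ u : ℕ → X, (∀ n, u n ∈ s \ B) ∧ Tendsto u atTop (𝓝 x) := by
  have hdense : Dense Bᶜ := μ.dense_of_ae (measure_eq_zero_iff_ae_notMem.1 hB)
  have hx : x ∈ closure (s ∩ Bᶜ) :=
    closure_mono (inter_subset_inter_left _ interior_subset)
      (hdense.open_subset_closure_inter isOpen_interior (mem_interior_iff_mem_nhds.2 hs))
  exact mem_closure_iff_seq_limit.1 hx

lemma linearIndependent_pair_one_of_mul_ne {K : Type*} [Field K] {v : K × K} {a : K}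
    (h : v.1 * a ≠ v.2) : LinearIndependent K ![v, (1, a)] := by
  rw [linearIndependent_fin2]
  simp only [Matrix.cons_val_one, Matrix.cons_val_zero]
  refine ⟨fun h1 => one_ne_zero (congrArg Prod.fst h1), fun b hb => h ?_⟩
  rw [← hb, Prod.smul_mk, smul_eq_mul, smul_eq_mul, mul_one]

lemma deriv_fst_apply {𝕜 E F : Type*} [NontriviallyNormedField 𝕜] [NormedAddCommGroup E]
    [NormedSpace 𝕜 E] [NormedAddCommGroup F] [NormedSpace 𝕜 F] {γ : 𝕜 → E × F} {t : 𝕜}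
    (hγ : DifferentiableAt 𝕜 γ t) : deriv (fun u => (γ u).1) t = (deriv γ t).1 :=
  (hasFDerivAt_fst (𝕜 := 𝕜) (p := γ t) |>.comp_hasDerivAt t hγ.hasDerivAt).deriv

lemma deriv_snd_apply {𝕜 E F : Type*} [NontriviallyNormedField 𝕜] [NormedAddCommGroup E]
    [NormedSpace 𝕜 E] [NormedAddCommGroup F] [NormedSpace 𝕜 F] {γ : 𝕜 → E × F} {t : 𝕜}
    (hγ : DifferentiableAt 𝕜 γ t) : deriv (fun u => (γ u).2) t = (deriv γ t).2 :=
  (hasFDerivAt_snd (𝕜 := 𝕜) (p := γ t) |>.comp_hasDerivAt t hγ.hasDerivAt).deriv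

lemma deriv_eq_derivWithin_Icc_or {g : ℝ → ℝ} {a b s : ℝ} (hab : a < b)
    (hg : DifferentiableOn ℝ g (Icc a b)) (hs : s ∈ Icc a b) :
    deriv g s = derivWithin g (Icc a b) s ∨ deriv g s = 0 ∧ (s = a ∨ s = b) := by
  by_cases hd : DifferentiableAt ℝ g s
  · exact .inl (hd.derivWithin (uniqueDiffOn_Icc hab s hs)).symm
  · refine .inr ⟨deriv_zero_of_not_differentiableAt hd, ?_⟩
    by_contra! hne
    exact hd (hg.differentiableAt (Icc_mem_nhds (hs.1.lt_of_ne hne.1.symm) (hs.2.lt_of_ne hne.2)))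

/-- Sard-type lemma: if a one-parameter family of graphs moves off itself to first
order, then parameters arbitrarily close to 0 make the graph transverse to a
given C¹ curve h in the plane. -/
theorem stmt13 (δ : ℝ) (hδ : 0 < δ) (f : ℝ × ℝ → ℝ)
    (hf : ContDiffOn ℝ 1 f (Set.Ioo (-δ) δ ×ˢ Set.Icc (0:ℝ) 1))
    (h : ℝ → ℝ × ℝ) (hh : ContDiff ℝ 1 h)
    (hmove : ∀ s ∈ Set.Icc (0:ℝ) 1, deriv (fun w => f (w, s)) 0 ≠ 0) :
    ∃ w : ℕ → ℝ, (∀ i, w i ∈ Set.Ioo (-δ) δ) ∧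
      Filter.Tendsto w Filter.atTop (nhds 0) ∧
      ∀ i, ∀ t : ℝ, ∀ s ∈ Set.Icc (0:ℝ) 1, h t = (s, f (w i, s)) →
        LinearIndependent ℝ ![deriv h t, ((1:ℝ), deriv (fun s' => f (w i, s')) s)] := by
  obtain ⟨ε, hε, hεδ, c, hc, hexp⟩ := exists_pos_forall_mul_abs_sub_le isOpen_Ioo
    ⟨neg_lt_zero.2 hδ, hδ⟩ isCompact_Icc (uniqueDiffOn_Icc one_pos) hf hmove
  have hFd : ∀ w ∈ Ioo (-δ) δ, DifferentiableOn ℝ (fun s => f (w, s)) (Icc 0 1) := fun w hw =>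
    (hf.differentiableOn one_ne_zero).comp (differentiableOn_const w |>.prodMk differentiableOn_id)
      fun _ hs => ⟨hw, hs⟩
  set bad : (ℝ → ℝ) → Set ℝ := fun σ => tangencyParams (fun w s => f (w, s))
    (fun w => derivWithin (fun s => f (w, s)) (Icc 0 1)) (Icc (-ε) ε) (Icc 0 1) σ (fun u => (h u).2)
  have hhd : Differentiable ℝ h := hh.differentiable one_ne_zero
  have hbad : ∀ σ, Differentiable ℝ σ → volume (bad σ) = 0 := fun σ hσ =>
    volume_tangencyParams_eq_zero hc hexp (fun w hw s hs => (hFd w (hεδ hw) s hs).hasDerivWithinAt)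
      hσ (differentiable_snd.comp hhd)
  obtain ⟨w, hw, hw₀⟩ := exists_seq_tendsto_forall_mem_diff_of_measure_zero
    (Icc_mem_nhds (neg_neg_of_pos hε) hε) (measure_union_null (measure_union_null
      (hbad (fun u => (h u).1) (differentiable_fst.comp hhd)) (hbad _ (differentiable_const 0)))
      (hbad _ (differentiable_const 1)))
  refine ⟨w, fun i => hεδ (hw i).1, hw₀, fun i t s hs hts => ?_⟩
  refine linearIndependent_pair_one_of_mul_ne fun hdet => ?_
  rw [← deriv_fst_apply (hhd t), ← deriv_snd_apply (hhd t)] at hdet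
  obtain ⟨rfl, hts₂⟩ := Prod.ext_iff.1 hts
  refine (hw i).2 ?_
  rcases deriv_eq_derivWithin_Icc_or one_pos (hFd _ (hεδ (hw i).1)) hs with hd | ⟨hd, hs₀ | hs₁⟩
  · exact .inl (.inl ⟨(hw i).1, t, hs, hts₂.symm, by beta_reduce; rwa [← hd]⟩)
  · exact .inl (.inr ⟨(hw i).1, t, hs₀ ▸ hs, hs₀ ▸ hts₂.symm, by simpa [hd] using hdet⟩)
  · exact .inr ⟨(hw i).1, t, hs₁ ▸ hs, hs₁ ▸ hts₂.symm, by simpa [hd] using hdet⟩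
end

section
/- Let a < b, let C > 0, let u : [a, b] → ℝ be differentiable with |u(t)| < 1 for all t ∈ [a, b], and let g : [a, b] → ℝ satisfy u'(t) = (1 − u(t)²)·g(t) and |g(t)| ≤ C for all t ∈ [a, b]. Then ((1 + u(b))/(1 − u(b))) · ((1 − u(a))/(1 + u(a))) ≤ exp(2C·(b − a)). -/
/-!
Since `artanh' = 1 / (1 - x²)`, the equation `u' = (1 - u²) g` says exactly that `(artanh ∘ u)' = g`.
The mean value inequality then gives `artanh (u b) - artanh (u a) ≤ C (b - a)`, and exponentiating
`2 artanh x = log ((1 + x) / (1 - x))` yields the estimate.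
-/

open Set

namespace Real

theorem hasDerivAt_artanh {x : ℝ} (hx : x ∈ Ioo (-1) 1) :
    HasDerivAt artanh (1 / (1 - x ^ 2)) x := by
  have h₁ : 0 < 1 + x := by linarith [hx.1]
  have h₂ : 0 < 1 - x := by linarith [hx.2]
  have hlog := ((((hasDerivAt_id' x).const_add 1).log h₁.ne').sub
    (((hasDerivAt_id' x).const_sub 1).log h₂.ne')).const_mul (1 / 2)
  rw [show 1 / (1 - x ^ 2) = 1 / 2 * (1 / (1 + x) - -1 / (1 - x)) by
    rw [show 1 - x ^ 2 = (1 + x) * (1 - x) by ring]; field_simp; ring]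
  refine hlog.congr_of_eventuallyEq ?_
  filter_upwards [Ioo_mem_nhds hx.1 hx.2] with y hy
  have hy₁ : 0 < 1 + y := by linarith [hy.1]
  have hy₂ : 0 < 1 - y := by linarith [hy.2]
  rw [artanh_eq_half_log (Ioo_subset_Icc_self hy), log_div hy₁.ne' hy₂.ne']
  rfl

theorem exp_two_mul_artanh {x : ℝ} (hx : x ∈ Ioo (-1) 1) :
    exp (2 * artanh x) = (1 + x) / (1 - x) := by
  have h₁ : 0 < 1 + x := by linarith [hx.1]
  have h₂ : 0 < 1 - x := by linarith [hx.2]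
  rw [mul_comm, exp_mul, exp_artanh hx, rpow_two, sq_sqrt (div_pos h₁ h₂).le]

end Real

open Real

theorem HasDerivWithinAt.artanh {f : ℝ → ℝ} {f' x : ℝ} {s : Set ℝ}
    (hf : HasDerivWithinAt f f' s x) (hx : f x ∈ Ioo (-1) 1) :
    HasDerivWithinAt (fun y => artanh (f y)) (f' / (1 - f x ^ 2)) s x := by
  rw [div_eq_mul_one_div, mul_comm]
  exact (hasDerivAt_artanh hx).comp_hasDerivWithinAt x hf

theorem stmt14_general (a b C : ℝ) (hab : a < b)
    (u g : ℝ → ℝ)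
    (hu : ∀ t ∈ Set.Icc a b, |u t| < 1)
    (hderiv : ∀ t ∈ Set.Icc a b,
      HasDerivWithinAt u ((1 - (u t) ^ 2) * g t) (Set.Icc a b) t)
    (hg : ∀ t ∈ Set.Icc a b, |g t| ≤ C) :
    ((1 + u b) / (1 - u b)) * ((1 - u a) / (1 + u a)) ≤ Real.exp (2 * C * (b - a)) := by
  have hmem : ∀ t ∈ Icc a b, u t ∈ Ioo (-1) 1 := fun t ht => abs_lt.mp (hu t ht)
  have ha : a ∈ Icc a b := left_mem_Icc.mpr hab.le
  have hb : b ∈ Icc a b := right_mem_Icc.mpr hab.le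
  have hartanh : ∀ t ∈ Icc a b, HasDerivWithinAt (fun s => artanh (u s)) (g t) (Icc a b) t := by
    intro t ht
    have hne : 1 - u t ^ 2 ≠ 0 := by nlinarith [(hmem t ht).1, (hmem t ht).2]
    exact ((hderiv t ht).artanh (hmem t ht)).congr_deriv (mul_div_cancel_left₀ _ hne)
  have hmvt : artanh (u b) - artanh (u a) ≤ C * (b - a) :=
    (le_abs_self _).trans <| norm_image_sub_le_of_norm_deriv_le_segment' hartanh
      (fun t ht => hg t (Ico_subset_Icc_self ht)) b hb
  calc ((1 + u b) / (1 - u b)) * ((1 - u a) / (1 + u a))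
      = exp (2 * artanh (u b)) / exp (2 * artanh (u a)) := by
        rw [exp_two_mul_artanh (hmem b hb), exp_two_mul_artanh (hmem a ha),
          div_eq_mul_inv _ ((1 + u a) / (1 - u a)), inv_div]
    _ = exp (2 * (artanh (u b) - artanh (u a))) := by rw [← exp_sub, mul_sub]
    _ ≤ exp (2 * C * (b - a)) := by
        rw [mul_assoc]
        gcongr

/-- Riccati-type estimate: if u' = (1 - u²) g with |g| ≤ C and |u| < 1 on [a,b],
then the logarithmic quantity (1+u)/(1-u) grows at most exponentially. -/
theorem stmt14 (a b C : ℝ) (hab : a < b) (hC : 0 < C)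
    (u g : ℝ → ℝ)
    (hu : ∀ t ∈ Set.Icc a b, |u t| < 1)
    (hderiv : ∀ t ∈ Set.Icc a b,
      HasDerivWithinAt u ((1 - (u t) ^ 2) * g t) (Set.Icc a b) t)
    (hg : ∀ t ∈ Set.Icc a b, |g t| ≤ C) :
    ((1 + u b) / (1 - u b)) * ((1 - u a) / (1 + u a)) ≤ Real.exp (2 * C * (b - a)) :=
  stmt14_general a b C hab u g hu hderiv hg
end
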